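/- arXiv:1601.04377 — 11 statements merged into one kernel-verified Lean document; each statement's English description precedes it below -/
import Mathlib

section
/- Let n ≥ 1 and q ∈ ℂ. Suppose x₁, …, x_{2n} ∈ ℂ are the roots (with multiplicity) of the monic polynomial K_n(X,q) = (1+X)^{2n} + qX^n, i.e. (1+X)^{2n} + qX^n = ∏_{l=1}^{2n}(X - x_l) in ℂ[X]. Then the discriminant satisfies ∏_{1 ≤ i < j ≤ 2n}(x_i - x_j)² = n^{2n} · q^{2n-1} · (q + 2^{2n}). -/
open Finset Polynomial

lemma derivative_finset_prod' {ι R : Type*} [DecidableEq ι] [CommSemiring R]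
    (s : Finset ι) (f : ι → R[X]) :
    derivative (∏ i ∈ s, f i) = ∑ i ∈ s, (∏ j ∈ s.erase i, f j) * derivative (f i) := by
  classical
  induction s using Finset.induction_on with
  | empty => simp
  | @insert a s ha ih =>
    rw [Finset.prod_insert ha, derivative_mul, ih, Finset.mul_sum, Finset.sum_insert ha,
      Finset.erase_insert ha]
    have h : ∀ i ∈ s, (∏ j ∈ (insert a s).erase i, f j) * derivative (f i)
        = f a * ((∏ j ∈ s.erase i, f j) * derivative (f i)) := by
      intro i hi
      rw [Finset.erase_insert_of_ne (by rintro rfl; exact ha hi),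
        Finset.prod_insert (fun h => ha (Finset.mem_of_mem_erase h)), mul_assoc]
    rw [Finset.sum_congr rfl h]
    ring

lemma pair_split' {m : ℕ} (x : Fin m → ℂ) :
    ∏ i, ∏ j ∈ Finset.univ.erase i, (x i - x j)
      = ∏ i, ∏ j ∈ Finset.univ.filter (fun j => i < j), (-(x i - x j) ^ 2) := by
  have hsplit : ∀ i : Fin m, (Finset.univ.erase i)
      = (Finset.univ.filter (fun j => i < j)) ∪ (Finset.univ.filter (fun j => j < i)) := by
    intro i
    ext j
    simp only [Finset.mem_erase, Finset.mem_union, Finset.mem_filter, Finset.mem_univ,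
      true_and, and_true, Fin.lt_def, ← Fin.val_ne_iff]
    omega
  have hdisj : ∀ i : Fin m, Disjoint (Finset.univ.filter (fun j => i < j))
      (Finset.univ.filter (fun j => j < i)) := by
    intro i
    simp only [Finset.disjoint_left, Finset.mem_filter, Finset.mem_univ, true_and]
    intro j h1 h2
    exact absurd (h1.trans h2) (lt_irrefl i)
  calc ∏ i, ∏ j ∈ Finset.univ.erase i, (x i - x j)
      = ∏ i, ((∏ j ∈ Finset.univ.filter (fun j => i < j), (x i - x j)) *
          ∏ j ∈ Finset.univ.filter (fun j => j < i), (x i - x j)) := by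
        refine Finset.prod_congr rfl fun i _ => ?_
        rw [hsplit i, Finset.prod_union (hdisj i)]
    _ = (∏ i, ∏ j ∈ Finset.univ.filter (fun j => i < j), (x i - x j)) *
          ∏ i, ∏ j ∈ Finset.univ.filter (fun j => j < i), (x i - x j) := by
        rw [Finset.prod_mul_distrib]
    _ = (∏ i, ∏ j ∈ Finset.univ.filter (fun j => i < j), (x i - x j)) *
          ∏ i, ∏ j ∈ Finset.univ.filter (fun j => i < j), (x j - x i) := by
        congr 1
        exact Finset.prod_comm' (by simp)
    _ = ∏ i, ∏ j ∈ Finset.univ.filter (fun j => i < j), ((x i - x j) * (x j - x i)) := by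
        rw [← Finset.prod_mul_distrib]
        exact Finset.prod_congr rfl fun i _ => (Finset.prod_mul_distrib).symm
    _ = ∏ i, ∏ j ∈ Finset.univ.filter (fun j => i < j), (-(x i - x j) ^ 2) := by
        refine Finset.prod_congr rfl fun i _ => Finset.prod_congr rfl fun j _ => ?_
        ring

lemma sum_card_lt' (m : ℕ) :
    ∑ i : Fin m, (Finset.univ.filter (fun j => i < j)).card = m * (m - 1) / 2 := by
  have h1 : ∀ i : Fin m, (Finset.univ.filter (fun j => i < j)).card = m - 1 - i := by
    intro i
    have : Finset.univ.filter (fun j => i < j) = Finset.Ioi i := by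
      ext j; simp [Finset.mem_Ioi]
    rw [this, Fin.card_Ioi]
  calc ∑ i : Fin m, (Finset.univ.filter (fun j => i < j)).card
      = ∑ i : Fin m, (m - 1 - (i : ℕ)) := Finset.sum_congr rfl fun i _ => h1 i
    _ = ∑ k ∈ Finset.range m, (m - 1 - k) := Fin.sum_univ_eq_sum_range _ m
    _ = ∑ k ∈ Finset.range m, k := Finset.sum_range_reflect (fun k => k) m
    _ = m * (m - 1) / 2 := Finset.sum_range_id m

lemma prod_neg' {m : ℕ} (s : Finset (Fin m)) (f : Fin m → ℂ) :
    ∏ j ∈ s, (- f j) = (-1 : ℂ) ^ s.card * ∏ j ∈ s, f j := by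
  calc ∏ j ∈ s, (- f j) = ∏ j ∈ s, ((-1 : ℂ) * f j) := by
        exact Finset.prod_congr rfl fun j _ => (neg_one_mul _).symm
    _ = (∏ _j ∈ s, (-1 : ℂ)) * ∏ j ∈ s, f j := Finset.prod_mul_distrib
    _ = (-1 : ℂ) ^ s.card * ∏ j ∈ s, f j := by rw [Finset.prod_const]

/-- Discriminant of `K_n(X,q) = (1+X)^(2n) + q X^n`:
if `x 1, …, x (2n)` are its roots with multiplicity, then
`∏_{i<j} (x i - x j)^2 = n^(2n) q^(2n-1) (q + 2^(2n))`. -/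
theorem discriminant_Kn (n : ℕ) (hn : 1 ≤ n) (q : ℂ) (x : Fin (2 * n) → ℂ)
    (hroots : (1 + (X : ℂ[X])) ^ (2 * n) + C q * X ^ n = ∏ l, (X - C (x l))) :
    ∏ i, ∏ j ∈ Finset.univ.filter (fun j => i < j), (x i - x j) ^ 2 =
      (n : ℂ) ^ (2 * n) * q ^ (2 * n - 1) * (q + 2 ^ (2 * n)) := by
  classical
  have hne : n ≠ 0 := by omega
  have hsign : ((-1 : ℂ)) ^ (2 * n) = 1 := by
    rw [pow_mul]; norm_num
  have hcardu : (Finset.univ : Finset (Fin (2 * n))).card = 2 * n := by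
    simp
  -- evaluation of the identity at a point
  have heval : ∀ c : ℂ, (1 + c) ^ (2 * n) + q * c ^ n = ∏ l, (c - x l) := by
    intro c
    have h := congrArg (Polynomial.eval c) hroots
    simpa [Polynomial.eval_prod] using h
  -- product of roots
  have hA : ∏ l, x l = 1 := by
    have h0 := heval 0
    rw [zero_pow hne] at h0
    have h1 : ∏ l, ((0 : ℂ) - x l)
        = (-1 : ℂ) ^ (Finset.univ : Finset (Fin (2 * n))).card * ∏ l, x l := by
      rw [← prod_neg']
      exact Finset.prod_congr rfl fun l _ => by ring
    rw [hcardu] at h1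
    rw [h1, hsign, one_mul] at h0
    simpa using h0.symm
  have hB : ∏ l, (1 + x l) = q * (-1) ^ n := by
    have h0 := heval (-1)
    have he : ((1 : ℂ) + -1) = 0 := by ring
    rw [he, zero_pow (by omega : 2 * n ≠ 0)] at h0
    have h1 : ∏ l, ((-1 : ℂ) - x l)
        = (-1 : ℂ) ^ (Finset.univ : Finset (Fin (2 * n))).card * ∏ l, (1 + x l) := by
      rw [← prod_neg']
      exact Finset.prod_congr rfl fun l _ => by ring
    rw [hcardu] at h1
    rw [h1, hsign, one_mul] at h0
    rw [← h0]; ring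
  have hC : ∏ l, (x l - 1) = 2 ^ (2 * n) + q := by
    have h0 := heval 1
    have h1 : ∏ l, ((1 : ℂ) - x l)
        = (-1 : ℂ) ^ (Finset.univ : Finset (Fin (2 * n))).card * ∏ l, (x l - 1) := by
      rw [← prod_neg']
      exact Finset.prod_congr rfl fun l _ => by ring
    rw [hcardu] at h1
    rw [h1, hsign, one_mul] at h0
    rw [← h0]; norm_num
  -- every x i is a root
  have hroot : ∀ i, (1 + x i) ^ (2 * n) + q * x i ^ n = 0 := by
    intro i
    rw [heval (x i)]
    exact Finset.prod_eq_zero (Finset.mem_univ i) (sub_self _)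
  -- derivative identity evaluated at roots
  have hg : ∀ i, ((2 * n : ℕ) : ℂ) * (1 + x i) ^ (2 * n - 1) + q * (n : ℂ) * x i ^ (n - 1)
      = ∏ j ∈ Finset.univ.erase i, (x i - x j) := by
    intro i
    have hd := congrArg Polynomial.derivative hroots
    rw [derivative_add, derivative_pow, derivative_mul, derivative_C,
      derivative_add, derivative_one, derivative_X, derivative_X_pow,
      derivative_finset_prod'] at hd
    have h := congrArg (Polynomial.eval (x i)) hd
    simp only [eval_add, eval_mul, eval_pow, eval_C, eval_X, eval_one, eval_finset_sum,
      eval_prod, eval_sub, eval_zero, zero_mul, add_zero, mul_one, derivative_sub, derivative_X,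
      derivative_C, sub_zero] at h
    have hzero : ∀ k ∈ (Finset.univ : Finset (Fin (2 * n))), k ≠ i →
        ∏ j ∈ Finset.univ.erase k, (x i - x j) = 0 := by
      intro k _ hk
      exact Finset.prod_eq_zero (Finset.mem_erase.mpr ⟨Ne.symm hk, Finset.mem_univ i⟩)
        (sub_self (x i))
    rw [Finset.sum_eq_single i hzero (fun h' => absurd (Finset.mem_univ i) h')] at h
    rw [← h]
    ring
  -- key pointwise identity
  have key : ∀ i, x i * ∏ j ∈ Finset.univ.erase i, (x i - x j)
      = (n : ℂ) * ((1 + x i) ^ (2 * n - 1) * (x i - 1)) := by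
    intro i
    have h1 := hg i
    have h2 := hroot i
    have p1 : (1 + x i) ^ (2 * n) = (1 + x i) ^ (2 * n - 1) * (1 + x i) := by
      rw [← pow_succ]; congr 1; omega
    have p2 : (x i) ^ n = (x i) ^ (n - 1) * x i := by
      rw [← pow_succ]; congr 1; omega
    rw [p1, p2] at h2
    push_cast at h1
    linear_combination (-(x i)) * h1 + (n : ℂ) * h2
  -- multiply over all i
  have hGprod : ∏ i, ∏ j ∈ Finset.univ.erase i, (x i - x j)
      = (n : ℂ) ^ (2 * n) * (q * (-1) ^ n) ^ (2 * n - 1) * (2 ^ (2 * n) + q) := by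
    have h := Finset.prod_congr rfl fun i (_ : i ∈ Finset.univ) => key i
    rw [Finset.prod_mul_distrib, hA, one_mul] at h
    rw [h, Finset.prod_mul_distrib, Finset.prod_mul_distrib, Finset.prod_const,
      Finset.prod_pow, hcardu, hB, hC]
    ring
  -- turn into signed square products
  set D := ∏ i, ∏ j ∈ Finset.univ.filter (fun j => i < j), (x i - x j) ^ 2 with hD
  have hsignprod : ∏ i, ∏ j ∈ Finset.univ.filter (fun j => i < j), (-(x i - x j) ^ 2)
      = (-1 : ℂ) ^ (n * (2 * n - 1)) * D := by
    have h1 : ∀ i : Fin (2 * n),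
        ∏ j ∈ Finset.univ.filter (fun j => i < j), (-(x i - x j) ^ 2)
          = (-1 : ℂ) ^ (Finset.univ.filter (fun j => i < j)).card *
            ∏ j ∈ Finset.univ.filter (fun j => i < j), (x i - x j) ^ 2 :=
      fun i => prod_neg' _ _
    rw [Finset.prod_congr rfl fun i _ => h1 i, Finset.prod_mul_distrib,
      Finset.prod_pow_eq_pow_sum, sum_card_lt']
    have hNcard : 2 * n * (2 * n - 1) / 2 = n * (2 * n - 1) := by
      rw [mul_assoc, Nat.mul_div_cancel_left _ (by norm_num : 0 < 2)]
    rw [hNcard, hD]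
  have E : (-1 : ℂ) ^ (n * (2 * n - 1)) * D
      = (n : ℂ) ^ (2 * n) * (q ^ (2 * n - 1) * (-1 : ℂ) ^ (n * (2 * n - 1))) *
        (2 ^ (2 * n) + q) := by
    rw [← hsignprod, ← pair_split', hGprod, mul_pow, ← pow_mul]
  have hs2 : (-1 : ℂ) ^ (n * (2 * n - 1)) * (-1 : ℂ) ^ (n * (2 * n - 1)) = 1 := by
    rw [← pow_add]
    exact Even.neg_one_pow ⟨n * (2 * n - 1), rfl⟩
  linear_combination ((-1 : ℂ) ^ (n * (2 * n - 1))) * E +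
    ((n : ℂ) ^ (2 * n) * q ^ (2 * n - 1) * (q + 2 ^ (2 * n)) - D) * hs2
end

section
/- For every n ≥ 1 and every m ≥ 0, the polynomial H_m^{(n)}(X) divides H_{3m+1}^{(n)}(X) in ℝ[X]. -/
open Finset Polynomial

/-
Since `3 (2m + 1) = 2 (3m + 1) + 1`, the angle `2πk / (2m + 1)` equals `2π(3k) / (2(3m + 1) + 1)`,
so the `k`-th factor of `H_m^{(n)}` is the `3k`-th factor of `H_{3m+1}^{(n)}`.
-/

theorem prod_Icc_mul_dvd_prod_Icc {M : Type*} [CommMonoid M] (f : ℕ → M) {d m N : ℕ}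
    (hd : 0 < d) (hN : d * m ≤ N) :
    ∏ k ∈ Icc 1 m, f (d * k) ∣ ∏ j ∈ Icc 1 N, f j := by
  rw [← prod_image (f := f) fun a _ b _ h => Nat.eq_of_mul_eq_mul_left hd h]
  refine prod_dvd_prod_of_subset _ _ f fun j hj => ?_
  obtain ⟨k, hk, rfl⟩ := mem_image.mp hj
  rw [mem_Icc] at hk ⊢
  constructor <;> nlinarith

theorem div_two_mul_add_one_eq_three_mul_div {K : Type*} [Field K] [NeZero (3 : K)] (x m : K) :
    x / (2 * m + 1) = 3 * x / (2 * (3 * m + 1) + 1) := by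
  rw [show 2 * (3 * m + 1) + 1 = 3 * (2 * m + 1) by ring, mul_div_mul_left _ _ three_ne_zero]

theorem H_dvd_H_general (n m : ℕ) :
    (∏ k ∈ Finset.Icc 1 m,
        ((X : ℝ[X]) + C ((2 * Real.cos (2 * Real.pi * k / (2 * m + 1)) + 2) ^ n))) ∣
      ∏ k ∈ Finset.Icc 1 (3 * m + 1),
        ((X : ℝ[X]) + C ((2 * Real.cos (2 * Real.pi * k / (2 * (3 * m + 1) + 1)) + 2) ^ n)) := by
  set f : ℕ → ℝ[X] := fun j =>
    X + C ((2 * Real.cos (2 * Real.pi * j / (2 * (3 * m + 1) + 1)) + 2) ^ n)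
  have hfactor : ∀ k : ℕ,
      X + C ((2 * Real.cos (2 * Real.pi * k / (2 * m + 1)) + 2) ^ n) = f (3 * k) := fun k => by
    simp only [f, Nat.cast_mul, Nat.cast_ofNat, div_two_mul_add_one_eq_three_mul_div _ (m : ℝ)]
    ring_nf
  simp only [hfactor]
  exact prod_Icc_mul_dvd_prod_Icc f three_pos le_self_add

/-- For any `n ≥ 1` and `m ≥ 0`, `H_m^{(n)}(X)` divides `H_{3m+1}^{(n)}(X)` in `ℝ[X]`,
where `H_m^{(n)}(X) = ∏_{k=1}^{m} (X + (2 cos(2πk/(2m+1)) + 2)^n)`. -/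
theorem H_dvd_H (n m : ℕ) (hn : 1 ≤ n) :
    (∏ k ∈ Finset.Icc 1 m,
        ((X : ℝ[X]) + C ((2 * Real.cos (2 * Real.pi * k / (2 * m + 1)) + 2) ^ n))) ∣
      ∏ k ∈ Finset.Icc 1 (3 * m + 1),
        ((X : ℝ[X]) + C ((2 * Real.cos (2 * Real.pi * k / (2 * (3 * m + 1) + 1)) + 2) ^ n)) :=
  H_dvd_H_general n m
end

section
/- Fix x ∈ ℝ. In the ring of formal power series ℝ[[t]], the identity ((1-t)² - x·t) · Σ_{m=0}^{∞} H_m^{(1)}(x) t^m = 1 - t holds, where H_m^{(1)}(x) = ∏_{k=1}^{m}(x + 2cos(2πk/(2m+1)) + 2) and H_0^{(1)}(x) = 1. Equivalently, (1-t)/((1-t)² - xt) = 1 + Σ_{m=1}^{∞} H_m^{(1)}(x) t^m. -/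
/-!
Put `x + 2 = z + z⁻¹` with `z ∈ ℂ` and `ζ = exp (2πi / (2m + 1))`. Then each factor of `H_m(x)`
splits over a conjugate pair of roots of unity, `z (x + 2 cos (2πk / (2m + 1)) + 2) =
(z + ζ ^ k) (z + ζ⁻¹ ^ k)`, so `z ^ m H_m(x) = ∏_{k=1}^{2m} (z + ζ ^ k) = ∑_{i=0}^{2m} (-z) ^ i`.
These geometric sums satisfy a three-term recurrence which becomes
`H_{m+2}(x) + H_m(x) = (x + 2) H_{m+1}(x)`; with `H_0 = 1` and `H_1 = x + 1` this is the identity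
of power series, since `(1 - t) ^ 2 - x t = 1 - (x + 2) t + t ^ 2`.
-/

open Finset

namespace IsPrimitiveRoot

open Polynomial

variable {R : Type*} [CommRing R] [IsDomain R] {n : ℕ} {μ : R}

lemma prod_X_sub_C_pow_succ_eq_geom_sum (hμ : IsPrimitiveRoot μ (n + 1)) :
    ∏ k ∈ range n, (X - C (μ ^ (k + 1))) = ∑ i ∈ range (n + 1), X ^ i := by
  have h := X_pow_sub_C_eq_prod hμ n.zero_lt_succ (one_pow (n + 1))
  rw [C_1, ← mul_geom_sum, prod_range_succ', pow_zero, mul_one, mul_comm, eq_comm] at h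
  simpa only [mul_one] using mul_right_cancel₀ (X_sub_C_ne_zero 1) h

lemma prod_add_pow_succ_eq_geom_sum_neg (hμ : IsPrimitiveRoot μ (2 * n + 1)) (z : R) :
    ∏ k ∈ range (2 * n), (z + μ ^ (k + 1)) = ∑ i ∈ range (2 * n + 1), (-z) ^ i := by
  have h := congrArg (eval (-z)) hμ.prod_X_sub_C_pow_succ_eq_geom_sum
  simpa only [eval_prod, eval_sub, eval_X, eval_C, eval_geom_sum, ← neg_add', prod_neg,
    card_range, (even_two_mul n).neg_one_pow, one_mul] using h

end IsPrimitiveRoot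

lemma geom_sum_neg_two_mul_add_one_recurrence {R : Type*} [CommRing R] (z : R) (n : ℕ) :
    ∑ i ∈ range (2 * (n + 2) + 1), (-z) ^ i + z ^ 2 * ∑ i ∈ range (2 * n + 1), (-z) ^ i =
      (z ^ 2 + 1) * ∑ i ∈ range (2 * (n + 1) + 1), (-z) ^ i := by
  simp only [show 2 * (n + 2) + 1 = 2 * n + 1 + 1 + 1 + 1 + 1 by ring,
    show 2 * (n + 1) + 1 = 2 * n + 1 + 1 + 1 by ring, sum_range_succ]
  ring

namespace Complex

lemma exp_two_pi_I_div_pow_add_pow_sub {n j : ℕ} (hn : n ≠ 0) (hj : j ≤ n) :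
    exp (2 * Real.pi * I / n) ^ j + exp (2 * Real.pi * I / n) ^ (n - j) =
      2 * cos (2 * Real.pi * j / n) := by
  rw [pow_sub₀ _ (exp_ne_zero _) hj, (isPrimitiveRoot_exp n hn).pow_eq_one, one_mul,
    ← exp_nat_mul, ← exp_neg, two_cos]
  congr 2 <;> ring

lemma exists_sq_add_one_eq_mul (c : ℂ) : ∃ z : ℂ, z ^ 2 + 1 = c * z := by
  obtain ⟨w, hw⟩ := IsAlgClosed.exists_pow_nat_eq (c ^ 2 - 4) two_pos
  exact ⟨(c + w) / 2, by linear_combination (1 / 4 : ℂ) * hw⟩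

end Complex

namespace PowerSeries

lemma one_sub_C_mul_X_add_X_sq_mul_mk {R : Type*} [CommRing R] (c : R) (a : ℕ → R)
    (h : ∀ n, a (n + 2) = c * a (n + 1) - a n) :
    (1 - C c * X + X ^ 2) * mk a = C (a 0) + C (a 1 - c * a 0) * X := by
  rw [show (1 - C c * X + X ^ 2) * mk a = mk a - C c * (X * mk a) + X ^ 2 * mk a by ring]
  ext (_ | _ | n)
  · simp [coeff_zero_eq_constantCoeff]
  · simp [coeff_X_pow_mul']
  · simp [coeff_X_pow_mul', h]

end PowerSeries

noncomputable def H1 (x : ℝ) (m : ℕ) : ℝ :=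
  ∏ k ∈ Icc 1 m, (x + 2 * Real.cos (2 * Real.pi * k / (2 * m + 1)) + 2)

lemma H1_zero (x : ℝ) : H1 x 0 = 1 := by simp [H1]

lemma H1_one (x : ℝ) : H1 x 1 = x + 1 := by
  rw [H1, Icc_self, prod_singleton]
  have h : 2 * Real.pi * (1 : ℕ) / (2 * (1 : ℕ) + 1) = Real.pi - Real.pi / 3 := by push_cast; ring
  rw [h, Real.cos_pi_sub, Real.cos_pi_div_three]
  ring

lemma H1_eq_prod_range (x : ℝ) (m : ℕ) :
    H1 x m = ∏ k ∈ range m, (x + 2 * Real.cos (2 * Real.pi * (k + 1 : ℕ) / (2 * m + 1)) + 2) := by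
  rw [H1, ← Ico_add_one_right_eq_Icc, prod_Ico_eq_prod_range, Nat.add_sub_cancel]
  simp only [add_comm 1]

open Complex in
lemma pow_mul_H1_eq_geom_sum_neg {x : ℝ} {z : ℂ} (hz : z ^ 2 + 1 = (x + 2) * z) (m : ℕ) :
    z ^ m * H1 x m = ∑ i ∈ range (2 * m + 1), (-z) ^ i := by
  set ζ := exp (2 * Real.pi * I / (2 * m + 1 : ℕ))
  have hζ : IsPrimitiveRoot ζ (2 * m + 1) := isPrimitiveRoot_exp _ (by omega)
  -- `m + (m - 1 - k)` is the index that `prod_range_reflect` pairs with `k`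
  have hpair : ∀ k ∈ range m, (z + ζ ^ (k + 1)) * (z + ζ ^ (m + (m - 1 - k) + 1)) =
      z * (x + 2 * cos (2 * Real.pi * (k + 1 : ℕ) / (2 * m + 1 : ℕ)) + 2) := by
    intro k hk
    rw [show m + (m - 1 - k) + 1 = 2 * m + 1 - (k + 1) by grind]
    have hunit : ζ ^ (k + 1) * ζ ^ (2 * m + 1 - (k + 1)) = 1 := by
      rw [← pow_add, Nat.add_sub_cancel' (by grind), hζ.pow_eq_one]
    linear_combination hz + hunit + z * exp_two_pi_I_div_pow_add_pow_sub (n := 2 * m + 1)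
      (j := k + 1) (by omega) (by grind)
  clear_value ζ
  rw [← hζ.prod_add_pow_succ_eq_geom_sum_neg, two_mul, prod_range_add,
    ← prod_range_reflect (fun k => z + ζ ^ (m + k + 1)), ← prod_mul_distrib, prod_congr rfl hpair,
    prod_mul_distrib, prod_const, card_range, H1_eq_prod_range]
  push_cast
  rfl

lemma H1_add_two_add_H1 (x : ℝ) (m : ℕ) : H1 x (m + 2) + H1 x m = (x + 2) * H1 x (m + 1) := by
  obtain ⟨z, hz⟩ := Complex.exists_sq_add_one_eq_mul (x + 2)
  have hz0 : z ≠ 0 := by rintro rfl; simp at hz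
  have key : z ^ (m + 2) * ((H1 x (m + 2) + H1 x m : ℝ) : ℂ) =
      z ^ (m + 2) * (((x + 2) * H1 x (m + 1) : ℝ) : ℂ) := by
    push_cast
    linear_combination pow_mul_H1_eq_geom_sum_neg hz (m + 2)
      + z ^ 2 * pow_mul_H1_eq_geom_sum_neg hz m
      - (x + 2) * z * pow_mul_H1_eq_geom_sum_neg hz (m + 1)
      + geom_sum_neg_two_mul_add_one_recurrence z m
      + (∑ i ∈ range (2 * (m + 1) + 1), (-z) ^ i) * hz
  exact_mod_cast mul_left_cancel₀ (pow_ne_zero _ hz0) key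

/-- Generating function for `H_m^{(1)}`: in `ℝ[[t]]`,
`((1-t)^2 - x t) · Σ_m H_m^{(1)}(x) t^m = 1 - t`. -/
theorem genfun_H1 (x : ℝ) :
    ((1 - PowerSeries.X) ^ 2 - PowerSeries.C x * PowerSeries.X) *
      PowerSeries.mk (fun m =>
        ∏ k ∈ Finset.Icc 1 m, (x + 2 * Real.cos (2 * Real.pi * k / (2 * m + 1)) + 2)) =
    1 - PowerSeries.X := by
  have hrec (n : ℕ) : H1 x (n + 2) = (x + 2) * H1 x (n + 1) - H1 x n := by
    linarith [H1_add_two_add_H1 x n]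
  open PowerSeries in
  calc ((1 - X) ^ 2 - C x * X) * PowerSeries.mk (H1 x)
      = (1 - C (x + 2) * X + X ^ 2) * PowerSeries.mk (H1 x) := by rw [map_add, map_ofNat]; ring
    _ = C (H1 x 0) + C (H1 x 1 - (x + 2) * H1 x 0) * X := one_sub_C_mul_X_add_X_sq_mul_mk _ _ hrec
    _ = 1 - X := by
      rw [H1_zero, H1_one, map_one, mul_one, show x + 1 - (x + 2) = -1 by ring, map_neg, map_one,
        neg_one_mul, sub_eq_add_neg]
end

section
/- For every m ≥ 1 and every x ∈ ℝ, ∏_{k=1}^{m}(x + 2cos(2πk/(2m+1)) + 2) = 2·Σ_{j=1}^{m}(-1)^{m-j} T_j((x+2)/2) + (-1)^m, where T_j denotes the j-th Chebyshev polynomial of the first kind. -/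
open Finset Polynomial

/-- Chebyshev `T` evaluated at `(z + z⁻¹)/2`. -/
lemma cheb_half_add_inv (z : ℂ) (hz : z ≠ 0) (n : ℕ) :
    (Polynomial.Chebyshev.T ℂ (n : ℤ)).eval ((z + z⁻¹) / 2) = (z ^ n + (z⁻¹) ^ n) / 2 := by
  set θ : ℂ := Complex.log z * (-Complex.I) with hθ
  have hθI : θ * Complex.I = Complex.log z := by
    have : θ * Complex.I = Complex.log z * (-(Complex.I * Complex.I)) := by rw [hθ]; ring
    rw [this, Complex.I_mul_I]; ring
  have hexp : Complex.exp (θ * Complex.I) = z := by rw [hθI, Complex.exp_log hz]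
  have hcos : Complex.cos θ = (z + z⁻¹) / 2 := by
    have h2 := Complex.two_cos θ
    rw [neg_mul, Complex.exp_neg, hexp] at h2
    linear_combination h2 / 2
  have hcosn : Complex.cos ((n : ℂ) * θ) = (z ^ n + (z⁻¹) ^ n) / 2 := by
    have h2 := Complex.two_cos ((n : ℂ) * θ)
    have e1 : Complex.exp ((n : ℂ) * θ * Complex.I) = z ^ n := by
      rw [mul_assoc, Complex.exp_nat_mul, hexp]
    have e2 : Complex.exp (-((n : ℂ) * θ) * Complex.I) = (z⁻¹) ^ n := by
      rw [show -((n : ℂ) * θ) * Complex.I = (n : ℂ) * (-(θ * Complex.I)) by ring,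
        Complex.exp_nat_mul, Complex.exp_neg, hexp, inv_pow]
    rw [neg_mul] at h2
    rw [e1] at h2
    rw [show -((n : ℂ) * θ * Complex.I) = -((n : ℂ) * θ) * Complex.I by ring, e2] at h2
    linear_combination h2 / 2
  rw [← hcos, Polynomial.Chebyshev.T_complex_cos]
  push_cast
  exact hcosn


lemma sum_side (z w : ℂ) (hzw : z * w = 1) (m : ℕ) :
    z ^ m * ((∑ j ∈ Finset.Icc 1 m, (-1 : ℂ) ^ (m - j) * (z ^ j + w ^ j)) + (-1) ^ m)
      = ∑ i ∈ Finset.range (2 * m + 1), (-z) ^ i := by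
  induction m with
  | zero => simp
  | succ m ih =>
    have hpow : z ^ (m + 1) * w ^ (m + 1) = 1 := by rw [← mul_pow, hzw, one_pow]
    have hsign : ∑ j ∈ Finset.Icc 1 m, (-1 : ℂ) ^ (m + 1 - j) * (z ^ j + w ^ j)
        = -∑ j ∈ Finset.Icc 1 m, (-1 : ℂ) ^ (m - j) * (z ^ j + w ^ j) := by
      rw [← Finset.sum_neg_distrib]
      refine Finset.sum_congr rfl fun j hj => ?_
      have hj' : j ≤ m := (Finset.mem_Icc.mp hj).2
      rw [show m + 1 - j = (m - j) + 1 by omega, pow_succ]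
      ring
    rw [Finset.sum_Icc_succ_top (by omega : 1 ≤ m + 1), hsign]
    have hR : ∑ i ∈ Finset.range (2 * (m + 1) + 1), (-z) ^ i
        = (∑ i ∈ Finset.range (2 * m + 1), (-z) ^ i) + (-z) ^ (2 * m + 1)
          + (-z) ^ (2 * m + 2) := by
      rw [show 2 * (m + 1) + 1 = (2 * m + 1) + 1 + 1 by ring, Finset.sum_range_succ,
        Finset.sum_range_succ]
    rw [hR]
    have hg : (∑ i ∈ Finset.range (2 * m + 1), (-z) ^ i) * ((-z) - 1)
        = (-z) ^ (2 * m + 1) - 1 := geom_sum_mul _ _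
    have ho : (-z) ^ (2 * m + 1) = -z ^ (2 * m + 1) := Odd.neg_pow ⟨m, by ring⟩ z
    have he : (-z) ^ (2 * m + 2) = z ^ (2 * m + 2) := Even.neg_pow ⟨m + 1, by ring⟩ z
    rw [ho] at hg ⊢; rw [he]
    simp only [Nat.sub_self, pow_zero, one_mul]
    linear_combination (-z) * ih + hpow + hg


lemma prod_Icc_one {M : Type*} [CommMonoid M] (f : ℕ → M) (m : ℕ) :
    ∏ k ∈ Finset.Icc 1 m, f k = ∏ i ∈ Finset.range m, f (i + 1) := by
  induction m with
  | zero => simp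
  | succ m ih => rw [Finset.prod_Icc_succ_top (by omega), ih, Finset.prod_range_succ]

lemma prod_side (m : ℕ) (z : ℂ) (hz0 : z ≠ 0) :
    (z + 1) * (z ^ m * ∏ k ∈ Finset.Icc 1 m,
        (z + z⁻¹ + (Complex.exp (2 * Real.pi * Complex.I / (2 * m + 1)) ^ k
          + (Complex.exp (2 * Real.pi * Complex.I / (2 * m + 1)) ^ k)⁻¹)))
      = z ^ (2 * m + 1) + 1 := by
  set ω : ℂ := Complex.exp (2 * Real.pi * Complex.I / (2 * m + 1)) with hωdef
  have hω : IsPrimitiveRoot ω (2 * m + 1) := by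
    have h := Complex.isPrimitiveRoot_exp (2 * m + 1) (by omega)
    convert h using 2
    push_cast; ring
  have hωN : ω ^ (2 * m + 1) = 1 := hω.pow_eq_one
  have hω0 : ω ≠ 0 := Complex.exp_ne_zero _
  have hfull : ∏ i ∈ Finset.range (2 * m + 1), (z + ω ^ i) = z ^ (2 * m + 1) + 1 := by
    have h := congrArg (Polynomial.eval (-z))
      (X_pow_sub_C_eq_prod hω (by omega) (one_pow (2 * m + 1)))
    simp only [eval_sub, eval_pow, eval_X, eval_one, eval_prod, eval_C, mul_one] at h
    have h2 : ∏ i ∈ Finset.range (2 * m + 1), (-z - ω ^ i)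
        = (-1 : ℂ) ^ (2 * m + 1) * ∏ i ∈ Finset.range (2 * m + 1), (z + ω ^ i) :=
      calc ∏ i ∈ Finset.range (2 * m + 1), (-z - ω ^ i)
          = ∏ i ∈ Finset.range (2 * m + 1), ((-1) * (z + ω ^ i)) :=
            Finset.prod_congr rfl fun i _ => by ring
        _ = (∏ _i ∈ Finset.range (2 * m + 1), (-1 : ℂ))
              * ∏ i ∈ Finset.range (2 * m + 1), (z + ω ^ i) := Finset.prod_mul_distrib
        _ = (-1 : ℂ) ^ (2 * m + 1) * ∏ i ∈ Finset.range (2 * m + 1), (z + ω ^ i) := by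
            rw [Finset.prod_const, Finset.card_range]
    rw [h2, Odd.neg_pow ⟨m, by ring⟩, Odd.neg_pow ⟨m, by ring⟩] at h
    linear_combination h
  rw [Finset.prod_range_succ', pow_zero] at hfull
  rw [show 2 * m = m + m by ring, Finset.prod_range_add] at hfull
  rw [prod_Icc_one]
  have hzm : z ^ m * ∏ i ∈ Finset.range m, (z + z⁻¹ + (ω ^ (i + 1) + (ω ^ (i + 1))⁻¹))
      = ∏ i ∈ Finset.range m, ((z + ω ^ (i + 1)) * (z + (ω ^ (i + 1))⁻¹)) := by
    have h1 : ∏ i ∈ Finset.range m, (z * (z + z⁻¹ + (ω ^ (i + 1) + (ω ^ (i + 1))⁻¹)))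
        = z ^ m * ∏ i ∈ Finset.range m, (z + z⁻¹ + (ω ^ (i + 1) + (ω ^ (i + 1))⁻¹)) := by
      rw [Finset.prod_mul_distrib, Finset.prod_const, Finset.card_range]
    rw [← h1]
    refine Finset.prod_congr rfl fun i _ => ?_
    have hc : (ω ^ (i + 1)) ≠ 0 := pow_ne_zero _ hω0
    field_simp
    ring
  rw [hzm, Finset.prod_mul_distrib]
  have hinv : ∏ i ∈ Finset.range m, (z + (ω ^ (i + 1))⁻¹)
      = ∏ i ∈ Finset.range m, (z + ω ^ (m + i + 1)) := by
    rw [← Finset.prod_range_reflect (fun i => z + ω ^ (m + i + 1)) m]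
    refine Finset.prod_congr rfl fun i hi => ?_
    have him : i < m := Finset.mem_range.mp hi
    congr 1
    refine inv_eq_of_mul_eq_one_right ?_
    rw [← pow_add, show (i + 1) + (m + (m - 1 - i) + 1) = 2 * m + 1 by omega]
    exact hωN
  rw [hinv]
  linear_combination hfull


lemma key_ne (m : ℕ) (x : ℝ) (hx : x ≠ -4) :
    ∏ k ∈ Finset.Icc 1 m, (x + 2 * Real.cos (2 * Real.pi * k / (2 * m + 1)) + 2) =
      2 * ∑ j ∈ Finset.Icc 1 m,
          (-1 : ℝ) ^ (m - j) * (Polynomial.Chebyshev.T ℝ (j : ℤ)).eval ((x + 2) / 2)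
        + (-1) ^ m := by
  set y : ℂ := ((x : ℂ) + 2) / 2 with hy
  obtain ⟨s, hs⟩ := IsAlgClosed.exists_pow_nat_eq (y ^ 2 - 1) (n := 2) (by norm_num)
  set z : ℂ := y + s with hzdef
  have hquad : z ^ 2 - 2 * y * z + 1 = 0 := by rw [hzdef]; linear_combination hs
  have hz0 : z ≠ 0 := by
    intro h
    rw [h] at hquad
    simpa using hquad
  have hmul : z * z⁻¹ = 1 := mul_inv_cancel₀ hz0
  have hinv : z⁻¹ = 2 * y - z := inv_eq_of_mul_eq_one_right (by linear_combination -hquad)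
  have hsum : z + z⁻¹ = (x : ℂ) + 2 := by rw [hinv, hy]; ring
  have hz1 : z + 1 ≠ 0 := by
    intro h
    have hzn : z = -1 := by linear_combination h
    rw [hzn] at hquad
    have hyx : (x : ℂ) = -4 := by rw [hy] at hquad; linear_combination hquad
    exact hx (by exact_mod_cast hyx)
  set ω : ℂ := Complex.exp (2 * Real.pi * Complex.I / (2 * m + 1)) with hωdef
  have hω0 : ω ≠ 0 := Complex.exp_ne_zero _
  -- cosine values
  have hcosk : ∀ k : ℕ, 2 * Complex.cos (2 * (Real.pi : ℂ) * k / (2 * m + 1))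
      = ω ^ k + (ω ^ k)⁻¹ := by
    intro k
    rw [Complex.two_cos]
    have h1 : (2 * (Real.pi : ℂ) * k / (2 * m + 1)) * Complex.I
        = (k : ℂ) * (2 * Real.pi * Complex.I / (2 * m + 1)) := by ring
    rw [h1, Complex.exp_nat_mul, neg_mul, h1, Complex.exp_neg, Complex.exp_nat_mul, hωdef]
  have hT : ∀ j : ℕ, (Polynomial.Chebyshev.T ℂ (j : ℤ)).eval (((x : ℂ) + 2) / 2)
      = (z ^ j + (z⁻¹) ^ j) / 2 := by
    intro j
    rw [show ((x : ℂ) + 2) / 2 = (z + z⁻¹) / 2 by rw [hsum]]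
    exact cheb_half_add_inv z hz0 j
  rw [← Complex.ofReal_inj]
  push_cast
  have hP : ∏ k ∈ Finset.Icc 1 m,
        ((x : ℂ) + 2 * Complex.cos (2 * (Real.pi : ℂ) * k / (2 * m + 1)) + 2)
      = ∏ k ∈ Finset.Icc 1 m, (z + z⁻¹ + (ω ^ k + (ω ^ k)⁻¹)) :=
    Finset.prod_congr rfl fun k _ => by linear_combination hcosk k - hsum
  have hS : (2 : ℂ) * ∑ j ∈ Finset.Icc 1 m,
        (-1 : ℂ) ^ (m - j) * (Polynomial.Chebyshev.T ℂ (j : ℤ)).eval (((x : ℂ) + 2) / 2)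
      = ∑ j ∈ Finset.Icc 1 m, (-1 : ℂ) ^ (m - j) * (z ^ j + (z⁻¹) ^ j) := by
    rw [Finset.mul_sum]
    refine Finset.sum_congr rfl fun j _ => ?_
    rw [hT j]
    ring
  apply mul_left_cancel₀ (mul_ne_zero hz1 (pow_ne_zero m hz0) :
    (z + 1) * z ^ m ≠ 0)
  have h1 := prod_side m z hz0
  rw [← hωdef] at h1
  have h2 := sum_side z z⁻¹ hmul m
  have hg := geom_sum_mul (-z) (2 * m + 1)
  rw [Odd.neg_pow ⟨m, by ring⟩ z] at hg
  rw [hP]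
  linear_combination h1 - (z + 1) * h2 + hg - (z + 1) * z ^ m * hS


/-- `H_m^{(1)}(x)` as an alternating sum of Chebyshev polynomials of the first kind:
`∏_{k=1}^m (x + 2cos(2πk/(2m+1)) + 2) = 2 Σ_{j=1}^m (-1)^(m-j) T_j((x+2)/2) + (-1)^m`. -/
theorem H1_eq_chebyshev_sum (m : ℕ) (hm : 1 ≤ m) (x : ℝ) :
    ∏ k ∈ Finset.Icc 1 m, (x + 2 * Real.cos (2 * Real.pi * k / (2 * m + 1)) + 2) =
      2 * ∑ j ∈ Finset.Icc 1 m,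
          (-1 : ℝ) ^ (m - j) * (Polynomial.Chebyshev.T ℝ (j : ℤ)).eval ((x + 2) / 2)
        + (-1) ^ m := by
  have hf : Continuous (fun t : ℝ =>
      ∏ k ∈ Finset.Icc 1 m, (t + 2 * Real.cos (2 * Real.pi * k / (2 * m + 1)) + 2)) := by
    apply continuous_finset_prod
    intro k _
    fun_prop
  have hg : Continuous (fun t : ℝ =>
      2 * ∑ j ∈ Finset.Icc 1 m,
          (-1 : ℝ) ^ (m - j) * (Polynomial.Chebyshev.T ℝ (j : ℤ)).eval ((t + 2) / 2)
        + (-1 : ℝ) ^ m) := by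
    refine (continuous_const.mul (continuous_finset_sum _ fun j _ => ?_)).add continuous_const
    exact continuous_const.mul
      ((Polynomial.Chebyshev.T ℝ (j : ℤ)).continuous.comp (by fun_prop))
  have heq := Continuous.ext_on (dense_compl_singleton (-4 : ℝ)) hf hg
    (fun t ht => key_ne m t ht)
  exact congrFun heq x
end

section
/- For every m ≥ 0 and every x ∈ ℝ, ∏_{k=1}^{m}(x + 2cos(2πk/(2m+1)) + 2) = Σ_{k=0}^{m} C(m+k, m-k) x^k, where C(a,b) denotes the binomial coefficient. -/
/-!
Put `x = t + t⁻¹ - 2`. Each factor becomes `t⁻¹ (t² + 2 cos θₖ t + 1)`, and grouping the roots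
`-ζ^k` of `X^(2m+1) + 1` into conjugate pairs gives `(t + 1) t^m ∏ₖ (…) = t^(2m+1) + 1`.
The right-hand side is the Morgan–Voyce polynomial `b_m`; its recurrence
`b_{m+2} = (x + 2) b_{m+1} - b_m` yields `(t + 1) t^m b_m(t + t⁻¹ - 2) = t^(2m+1) + 1` as well.
So the two polynomials in `x` agree on the infinite set `{t + t⁻¹ - 2 | t ≥ 1}`.
-/

open Finset Polynomial

lemma prod_range_two_mul_add_one {M : Type*} [CommMonoid M] (f : ℕ → M) (m : ℕ) :
    ∏ i ∈ range (2 * m + 1), f i = f 0 * ∏ k ∈ Icc 1 m, (f k * f (2 * m + 1 - k)) := by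
  rw [prod_mul_distrib, ← Ico_add_one_right_eq_Icc, prod_Ico_reflect f 1 (by omega),
    show 2 * m + 1 + 1 - (m + 1) = m + 1 by omega, show 2 * m + 1 + 1 - 1 = 2 * m + 1 by omega,
    ← mul_assoc, ← prod_range_one f, prod_range_mul_prod_Ico f (by omega),
    prod_range_mul_prod_Ico f (by omega)]

lemma ofReal_add_exp_mul_add_exp_neg (t θ : ℝ) :
    ((t : ℂ) + Complex.exp (θ * Complex.I)) * (t + Complex.exp (-θ * Complex.I)) =
      (t ^ 2 + 2 * Real.cos θ * t + 1 : ℝ) := by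
  have hcos := Complex.two_cos θ
  have hmul : Complex.exp (θ * Complex.I) * Complex.exp (-θ * Complex.I) = 1 := by
    rw [← Complex.exp_add]; simp
  push_cast
  linear_combination (t : ℂ) * hcos.symm + hmul

theorem pow_two_mul_add_one_add_one_eq_mul_prod_cos (m : ℕ) (t : ℝ) :
    t ^ (2 * m + 1) + 1 =
      (t + 1) * ∏ k ∈ Icc 1 m, (t ^ 2 + 2 * Real.cos (2 * Real.pi * k / (2 * m + 1)) * t + 1) := by
  set n := 2 * m + 1 with hn
  set ζ := Complex.exp (2 * Real.pi * Complex.I / n)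
  have hζ : IsPrimitiveRoot ζ n := Complex.isPrimitiveRoot_exp n (by omega)
  have hζ_pow (k : ℕ) :
      ζ ^ k = Complex.exp (((2 * Real.pi * k / (2 * m + 1) : ℝ) : ℂ) * Complex.I) := by
    rw [← Complex.exp_nat_mul]
    congr 1
    push_cast [hn]
    field_simp
  have hζ_pow_sub {k : ℕ} (hk : k ≤ n) :
      ζ ^ (n - k) = Complex.exp (-((2 * Real.pi * k / (2 * m + 1) : ℝ) : ℂ) * Complex.I) := by
    rw [neg_mul, Complex.exp_neg, ← hζ_pow, pow_sub₀ ζ (hζ.ne_zero (by omega)) hk,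
      hζ.pow_eq_one, one_mul]
  have hfactor : (t : ℂ) ^ n + 1 = ∏ i ∈ range n, ((t : ℂ) + ζ ^ i) := by
    have e : (-1 : ℂ) ^ n = -1 := Odd.neg_one_pow ⟨m, rfl⟩
    simpa [eval_prod] using congrArg (eval (t : ℂ)) (X_pow_sub_C_eq_prod hζ (by omega) e)
  apply Complex.ofReal_injective
  push_cast
  rw [hfactor, hn, prod_range_two_mul_add_one, pow_zero]
  congr 1
  refine prod_congr rfl fun k hk => ?_
  rw [hζ_pow, hζ_pow_sub (by have := (mem_Icc.mp hk).2; omega), ofReal_add_exp_mul_add_exp_neg]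
  push_cast
  ring

lemma Nat.choose_add_two_add_choose (n j : ℕ) :
    (n + 2).choose (j + 2) + n.choose (j + 2) = n.choose j + 2 * (n + 1).choose (j + 2) := by
  simp only [Nat.choose_succ_succ]
  ring

section MorganVoyce

variable {R : Type*} [CommRing R]

def morganVoyce (m : ℕ) (x : R) : R :=
  ∑ k ∈ range (m + 1), ((m + k).choose (m - k) : R) * x ^ k

-- `(m + k).choose (2 * k)` vanishes for `k > m`, unlike `(m + k).choose (m - k)` with its
-- truncated subtraction, so the sum may be extended to any longer range.
lemma morganVoyce_eq_sum_range {m N : ℕ} (h : m < N) (x : R) :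
    morganVoyce m x = ∑ k ∈ range N, ((m + k).choose (2 * k) : R) * x ^ k := by
  induction N, h using Nat.le_induction with
  | base =>
    refine sum_congr rfl fun k hk => ?_
    rw [Nat.choose_symm_of_eq_add (show m + k = m - k + 2 * k by have := mem_range.mp hk; omega)]
  | succ N hN ih =>
    rw [sum_range_succ, ← ih, Nat.choose_eq_zero_of_lt (by omega), Nat.cast_zero, zero_mul,
      add_zero]

lemma sum_range_choose_two_mul_recurrence (m N : ℕ) (x : R) :
    ∑ k ∈ range (N + 1), ((m + 2 + k).choose (2 * k) : R) * x ^ k +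
        ∑ k ∈ range (N + 1), ((m + k).choose (2 * k) : R) * x ^ k =
      x * ∑ k ∈ range N, ((m + 1 + k).choose (2 * k) : R) * x ^ k +
        2 * ∑ k ∈ range (N + 1), ((m + 1 + k).choose (2 * k) : R) * x ^ k := by
  induction N with
  | zero => norm_num
  | succ N ih =>
    have hpascal : ((m + 2 + (N + 1)).choose (2 * (N + 1)) : R) +
          (m + (N + 1)).choose (2 * (N + 1)) =
        (m + 1 + N).choose (2 * N) + 2 * (m + 1 + (N + 1)).choose (2 * (N + 1)) := by
      have := congrArg (Nat.cast : ℕ → R) (Nat.choose_add_two_add_choose (m + 1 + N) (2 * N))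
      push_cast at this
      rw [show m + 2 + (N + 1) = m + 1 + N + 2 by omega, show m + (N + 1) = m + 1 + N by omega,
        show m + 1 + (N + 1) = m + 1 + N + 1 by omega, show 2 * (N + 1) = 2 * N + 2 by omega]
      exact this
    simp only [sum_range_succ _ (N + 1)]
    rw [sum_range_succ (fun k => ((m + 1 + k).choose (2 * k) : R) * x ^ k) N] at ih ⊢
    linear_combination ih + x ^ (N + 1) * hpascal

lemma morganVoyce_zero (x : R) : morganVoyce 0 x = 1 := by simp [morganVoyce]

lemma morganVoyce_one (x : R) : morganVoyce 1 x = x + 1 := by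
  simp [morganVoyce, sum_range_succ, add_comm]

lemma morganVoyce_add_two (m : ℕ) (x : R) :
    morganVoyce (m + 2) x = (x + 2) * morganVoyce (m + 1) x - morganVoyce m x := by
  have h := sum_range_choose_two_mul_recurrence m (m + 2) x
  rw [← morganVoyce_eq_sum_range (by omega), ← morganVoyce_eq_sum_range (by omega),
    ← morganVoyce_eq_sum_range (by omega), ← morganVoyce_eq_sum_range (by omega)] at h
  linear_combination h

end MorganVoyce

lemma add_one_mul_pow_mul_morganVoyce {K : Type*} [Field K] {t : K} (ht : t ≠ 0) (m : ℕ) :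
    (t + 1) * t ^ m * morganVoyce m (t + t⁻¹ - 2) = t ^ (2 * m + 1) + 1 := by
  have hinv : t * t⁻¹ = 1 := mul_inv_cancel₀ ht
  induction m using Nat.twoStepInduction with
  | zero => simp [morganVoyce_zero]
  | one => rw [morganVoyce_one]; linear_combination (t + 1) * hinv
  | more m ih₀ ih₁ =>
    rw [morganVoyce_add_two]
    linear_combination (t ^ 2 + 1) * ih₁ - t ^ 2 * ih₀ +
      (t + 1) * t ^ (m + 1) * morganVoyce (m + 1) (t + t⁻¹ - 2) * hinv

lemma add_one_mul_pow_mul_prod_cos {t : ℝ} (ht : t ≠ 0) (m : ℕ) :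
    (t + 1) * t ^ m *
        ∏ k ∈ Icc 1 m, (t + t⁻¹ - 2 + 2 * Real.cos (2 * Real.pi * k / (2 * m + 1)) + 2) =
      t ^ (2 * m + 1) + 1 := by
  rw [pow_two_mul_add_one_add_one_eq_mul_prod_cos, mul_assoc]
  congr 1
  rw [show t ^ m = ∏ _k ∈ Icc 1 m, t by simp, ← prod_mul_distrib]
  refine prod_congr rfl fun k _ => ?_
  field_simp
  ring

lemma prod_cos_eq_morganVoyce {t : ℝ} (ht : 0 < t) (m : ℕ) :
    ∏ k ∈ Icc 1 m, (t + t⁻¹ - 2 + 2 * Real.cos (2 * Real.pi * k / (2 * m + 1)) + 2) =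
      morganVoyce m (t + t⁻¹ - 2) :=
  mul_left_cancel₀ (by positivity : (t + 1) * t ^ m ≠ 0)
    ((add_one_mul_pow_mul_prod_cos ht.ne' m).trans (add_one_mul_pow_mul_morganVoyce ht.ne' m).symm)

lemma strictMonoOn_add_inv : StrictMonoOn (fun t : ℝ => t + t⁻¹) (Set.Ici 1) := by
  intro a ha b hb hab
  simp only [Set.mem_Ici] at ha hb
  have hinv : a⁻¹ - b⁻¹ = (b - a) / (a * b) := by field_simp
  have : (b - a) / (a * b) < b - a := div_lt_self (by linarith) (by nlinarith)
  dsimp only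
  linarith

lemma infinite_image_add_inv_sub_two : ((fun t : ℝ => t + t⁻¹ - 2) '' Set.Ici 1).Infinite :=
  (Set.Ici_infinite 1).image fun a ha b hb h => strictMonoOn_add_inv.injOn ha hb (by simpa using h)

/-- Explicit formula for `H_m^{(1)}`:
`∏_{k=1}^m (x + 2cos(2πk/(2m+1)) + 2) = Σ_{k=0}^m C(m+k, m-k) x^k`. -/
theorem H1_coeff (m : ℕ) (x : ℝ) :
    ∏ k ∈ Finset.Icc 1 m, (x + 2 * Real.cos (2 * Real.pi * k / (2 * m + 1)) + 2) =
      ∑ k ∈ Finset.range (m + 1), (Nat.choose (m + k) (m - k) : ℝ) * x ^ k := by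
  let P : ℝ[X] := ∏ k ∈ Icc 1 m, (X + C (2 * Real.cos (2 * Real.pi * k / (2 * m + 1)) + 2))
  let Q : ℝ[X] := ∑ k ∈ range (m + 1), C ((m + k).choose (m - k) : ℝ) * X ^ k
  have hP (y : ℝ) :
      P.eval y = ∏ k ∈ Icc 1 m, (y + 2 * Real.cos (2 * Real.pi * k / (2 * m + 1)) + 2) := by
    simp [P, eval_prod, add_assoc]
  have hQ (y : ℝ) : Q.eval y = morganVoyce m y := by
    simp [Q, morganVoyce, eval_finsetSum]
  have hPQ : P = Q := by
    refine eq_of_infinite_eval_eq P Q (infinite_image_add_inv_sub_two.mono ?_)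
    rintro _ ⟨t, ht, rfl⟩
    simp only [Set.mem_ofPred_eq, hP, hQ]
    exact prod_cos_eq_morganVoyce (by linarith [Set.mem_Ici.mp ht]) m
  rw [← hP, hPQ, hQ]
  rfl
end

section
/- Fix x ∈ ℝ. In the ring of formal power series ℝ[[t]], the identity ((1-t)⁴ - x·t·(1+t)²) · Σ_{m=0}^{∞} H_m^{(2)}(x) t^m = (1-t)³ holds, where H_m^{(2)}(x) = ∏_{k=1}^{m}(x + (2cos(2πk/(2m+1)) + 2)²) and H_0^{(2)}(x) = 1. Equivalently, (1-t)³/((1-t)⁴ - xt(1+t)²) = 1 + Σ_{m=1}^{∞} H_m^{(2)}(x) t^m. -/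
/-!
Writing `x = -s²`, each factor splits as `(2c + 2 + s)(2c + 2 - s)`, so
`H_m(x) = P_m(2 + s) P_m(2 - s)` with `P_m(u) = ∏ₖ (u + 2 cos (2πk/(2m+1)))`.
Pairing the `(2m+1)`-st roots of unity `ζᵏ` and `ζ⁻ᵏ` gives `zᵐ P_m(z + z⁻¹) = ∑_{j ≤ 2m} (-z)ʲ`,
hence the Chebyshev recurrence `P_{m+2}(u) = u P_{m+1}(u) - P_m(u)`, `P_0 = 1`, `P_1 = u - 1`.
The product of two such sequences with parameters `a, b` satisfies the recurrence with
characteristic polynomial `1 - ab t + (a² + b² - 2) t² - ab t³ + t⁴`, which for `a, b = 2 ± s`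
is `(1 - t)⁴ - x t (1 + t)²`; the initial terms give the numerator `(1 - t)³`.
-/

open Finset PowerSeries Real

lemma quartic_recurrence_mul {R : Type*} [CommRing R] {f g : ℕ → R} {a b : R}
    (hf : ∀ m, f (m + 2) = a * f (m + 1) - f m) (hg : ∀ m, g (m + 2) = b * g (m + 1) - g m)
    (m : ℕ) :
    f (m + 4) * g (m + 4) - a * b * (f (m + 3) * g (m + 3)) +
        (a ^ 2 + b ^ 2 - 2) * (f (m + 2) * g (m + 2)) - a * b * (f (m + 1) * g (m + 1)) +
        f m * g m = 0 := by
  rw [hf (m + 2), hg (m + 2), hf (m + 1), hg (m + 1), hf m, hg m]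
  ring

lemma quartic_mul_mk_mul_eq {R : Type*} [CommRing R] {f g : ℕ → R} {a b : R}
    (hf₀ : f 0 = 1) (hf₁ : f 1 = a - 1) (hf : ∀ m, f (m + 2) = a * f (m + 1) - f m)
    (hg₀ : g 0 = 1) (hg₁ : g 1 = b - 1) (hg : ∀ m, g (m + 2) = b * g (m + 1) - g m) :
    (1 - C (a * b) * X + C (a ^ 2 + b ^ 2 - 2) * X ^ 2 - C (a * b) * X ^ 3 + X ^ 4) *
        PowerSeries.mk (fun m => f m * g m) =
      1 - C (a + b - 1) * X + C (a + b - 1) * X ^ 2 - X ^ 3 := by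
  ext (_ | _ | _ | _ | n) <;>
    simp only [add_mul, sub_mul, one_mul, mul_assoc, map_add, map_sub, coeff_C_mul,
      coeff_X_pow_mul', coeff_succ_X_mul, coeff_mk] <;>
    simp [coeff_X_pow, coeff_X, coeff_one, hf₀, hf₁, hf 0, hf 1, hg₀, hg₁, hg 0, hg 1]
  · ring
  · ring
  · ring
  · linear_combination quartic_recurrence_mul hf hg n

lemma sub_cexp_pow_mul_sub_cexp_pow_sub {n k : ℕ} (hk : k ≤ n) (y : ℂ) :
    (y - Complex.exp (2 * π * Complex.I / n) ^ k) *
        (y - Complex.exp (2 * π * Complex.I / n) ^ (n - k)) =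
      y ^ 2 - 2 * Real.cos (2 * π * k / n) * y + 1 := by
  rcases Nat.eq_zero_or_pos n with rfl | hn
  · obtain rfl : k = 0 := by omega
    simp only [pow_zero, Nat.cast_zero, mul_zero, zero_div, Real.cos_zero, Complex.ofReal_one]
    ring
  have hpow : ∀ j : ℕ, Complex.exp (2 * π * Complex.I / n) ^ j =
      Complex.exp ((2 * π * j / n : ℝ) * Complex.I) := by
    intro j
    rw [← Complex.exp_nat_mul]
    push_cast
    ring_nf
  set θ : ℂ := ((2 * π * k / n : ℝ) : ℂ)
  have hsub : ((2 * π * ((n - k : ℕ) : ℝ) / n : ℝ) : ℂ) = 2 * π - θ := by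
    have : (n : ℂ) ≠ 0 := by exact_mod_cast hn.ne'
    push_cast [θ, Nat.cast_sub hk]
    field_simp
  rw [hpow, hpow, hsub, show (2 * π - θ) * Complex.I = 2 * π * Complex.I + -θ * Complex.I by ring,
    Complex.exp_add, Complex.exp_two_pi_mul_I, one_mul, Complex.ofReal_cos, Complex.two_cos]
  have hinv : Complex.exp (θ * Complex.I) * Complex.exp (-θ * Complex.I) = 1 := by
    rw [← Complex.exp_add]; simp
  linear_combination hinv

lemma prod_sq_sub_two_cos_mul_add_one_eq_geom_sum (m : ℕ) (y : ℂ) :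
    ∏ k ∈ Icc 1 m, (y ^ 2 - 2 * Real.cos (2 * π * k / (2 * m + 1)) * y + 1) =
      ∑ j ∈ range (2 * m + 1), y ^ j := by
  set ζ := Complex.exp (2 * π * Complex.I / (2 * m + 1 : ℕ))
  have hζ : IsPrimitiveRoot ζ (2 * m + 1) := Complex.isPrimitiveRoot_exp _ (by omega)
  have hX : ∏ i ∈ range (2 * m), (Polynomial.X - Polynomial.C (ζ ^ (i + 1))) =
      ∑ j ∈ range (2 * m + 1), Polynomial.X ^ j := by
    have := X_pow_sub_C_eq_prod hζ (by omega) (one_pow _)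
    rw [Polynomial.C_1, ← mul_geom_sum, prod_range_succ', pow_zero, mul_one, mul_comm,
      eq_comm] at this
    simpa using mul_right_cancel₀ (Polynomial.X_sub_C_ne_zero 1) this
  have hy := congrArg (Polynomial.eval y) hX
  simp only [Polynomial.eval_prod, Polynomial.eval_sub, Polynomial.eval_X, Polynomial.eval_C,
    Polynomial.eval_finsetSum, Polynomial.eval_pow] at hy
  -- pair the factors for `ζ ^ (i + 1)` and `ζ ^ (2m + 1 - (i + 1))`
  rw [← hy, show 2 * m = m + m by ring, prod_range_add,
    ← prod_range_reflect (fun i => y - ζ ^ (m + i + 1)), ← prod_mul_distrib,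
    ← Ico_add_one_right_eq_Icc, prod_Ico_eq_prod_range, Nat.add_sub_cancel]
  refine prod_congr rfl fun i hi => ?_
  have hi : i < m := mem_range.1 hi
  rw [show m + (m - 1 - i) + 1 = (2 * m + 1) - (i + 1) by omega,
    sub_cexp_pow_mul_sub_cexp_pow_sub (by omega)]
  push_cast
  ring_nf

-- The Chebyshev polynomial of the third kind `V_m(u / 2)`.
noncomputable def cosProd (m : ℕ) (u : ℂ) : ℂ :=
  ∏ k ∈ Icc 1 m, (u + 2 * Real.cos (2 * π * k / (2 * m + 1)))

lemma pow_mul_cosProd {u z : ℂ} (hz : z ^ 2 + 1 = u * z) (m : ℕ) :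
    z ^ m * cosProd m u = ∑ j ∈ range (2 * m + 1), (-z) ^ j := by
  have hzm : z ^ m = ∏ _k ∈ Icc 1 m, z := by simp
  rw [← prod_sq_sub_two_cos_mul_add_one_eq_geom_sum, cosProd, hzm, ← prod_mul_distrib]
  refine prod_congr rfl fun k _ => ?_
  linear_combination -hz

lemma exists_sq_add_one_eq_mul (u : ℂ) : ∃ z : ℂ, z ^ 2 + 1 = u * z := by
  obtain ⟨w, hw⟩ := IsAlgClosed.exists_pow_nat_eq (u ^ 2 - 4) two_pos
  exact ⟨(u + w) / 2, by linear_combination hw / 4⟩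

lemma cosProd_zero (u : ℂ) : cosProd 0 u = 1 := by
  simp [cosProd]

lemma cosProd_one (u : ℂ) : cosProd 1 u = u - 1 := by
  obtain ⟨z, hz⟩ := exists_sq_add_one_eq_mul u
  have hz₀ : z ≠ 0 := by rintro rfl; simp at hz
  apply mul_left_cancel₀ hz₀
  have h := pow_mul_cosProd hz 1
  simp only [pow_one, Finset.sum_range_succ, Finset.sum_range_zero] at h
  linear_combination h + hz

lemma cosProd_add_two (u : ℂ) (m : ℕ) :
    cosProd (m + 2) u = u * cosProd (m + 1) u - cosProd m u := by
  obtain ⟨z, hz⟩ := exists_sq_add_one_eq_mul u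
  have hz₀ : z ≠ 0 := by rintro rfl; simp at hz
  apply mul_left_cancel₀ (pow_ne_zero (m + 2) hz₀)
  have h₀ := pow_mul_cosProd hz m
  have h₁ := pow_mul_cosProd hz (m + 1)
  have h₂ := pow_mul_cosProd hz (m + 2)
  rw [show 2 * (m + 1) + 1 = 2 * m + 1 + 1 + 1 by ring, sum_range_succ, sum_range_succ] at h₁
  rw [show 2 * (m + 2) + 1 = 2 * m + 1 + 1 + 1 + 1 + 1 by ring, sum_range_succ, sum_range_succ,
    sum_range_succ, sum_range_succ] at h₂
  linear_combination h₂ - z * u * h₁ + z ^ 2 * h₀ +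
    (∑ j ∈ range (2 * m + 1), (-z) ^ j + (-z) ^ (2 * m + 1) + (-z) ^ (2 * m + 2)) * hz

lemma ofReal_prod_eq_cosProd_mul_cosProd {x : ℝ} {s : ℂ} (hs : s ^ 2 = -x) (m : ℕ) :
    ((∏ k ∈ Icc 1 m, (x + (2 * Real.cos (2 * π * k / (2 * m + 1)) + 2) ^ 2) : ℝ) : ℂ) =
      cosProd m (2 + s) * cosProd m (2 - s) := by
  rw [cosProd, cosProd, ← prod_mul_distrib]
  push_cast
  refine prod_congr rfl fun k _ => ?_
  linear_combination hs

/-- Generating function for `H_m^{(2)}`: in `ℝ[[t]]`,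
`((1-t)^4 - x t (1+t)^2) · Σ_m H_m^{(2)}(x) t^m = (1-t)^3`. -/
theorem genfun_H2 (x : ℝ) :
    ((1 - PowerSeries.X) ^ 4 -
        PowerSeries.C x * PowerSeries.X * (1 + PowerSeries.X) ^ 2) *
      PowerSeries.mk (fun m =>
        ∏ k ∈ Finset.Icc 1 m, (x + (2 * Real.cos (2 * Real.pi * k / (2 * m + 1)) + 2) ^ 2)) =
    (1 - PowerSeries.X) ^ 3 := by
  obtain ⟨s, hs⟩ := IsAlgClosed.exists_pow_nat_eq (-(x : ℂ)) two_pos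
  have key := quartic_mul_mk_mul_eq (f := (cosProd · (2 + s))) (g := (cosProd · (2 - s)))
    (cosProd_zero _) (cosProd_one _) (cosProd_add_two _)
    (cosProd_zero _) (cosProd_one _) (cosProd_add_two _)
  rw [show (2 + s) * (2 - s) = 4 + x by linear_combination -hs,
    show (2 + s) ^ 2 + (2 - s) ^ 2 - 2 = 6 - 2 * x by linear_combination 2 * hs,
    show 2 + s + (2 - s) - 1 = 3 by ring] at key
  have hmk : PowerSeries.map Complex.ofRealHom (PowerSeries.mk fun m =>
      ∏ k ∈ Icc 1 m, (x + (2 * Real.cos (2 * π * k / (2 * m + 1)) + 2) ^ 2)) =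
      PowerSeries.mk fun m => cosProd m (2 + s) * cosProd m (2 - s) := by
    ext m
    simp only [coeff_map, coeff_mk, Complex.ofRealHom_eq_coe,
      ofReal_prod_eq_cosProd_mul_cosProd hs]
  apply PowerSeries.map_injective Complex.ofRealHom Complex.ofReal_injective
  simp only [map_mul, map_sub, map_add, map_pow, map_one, map_X, map_C, hmk,
    Complex.ofRealHom_eq_coe]
  convert key using 1 <;> simp only [map_add, map_sub, map_mul, map_ofNat] <;> ring
end

section
/- For all integers m ≥ 0 and k ≥ 0 with k ≤ m, the following identity holds in ℤ: Σ_{i=0}^{2k} (-1)^i · C(m+k+i, m+k-i) · C(m+3k-i, m-k+i) = (-1)^k · Σ_{i=0}^{m} C(2k, m-i) · C(4k+i, i). -/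
open Finset

/-- `kbS a c m = [x^m] (1+x)^a / (1-x)^(c+1)`. -/
def kbS (a c m : ℕ) : ℤ :=
  ∑ i ∈ Finset.range (m+1), (Nat.choose a (m - i) : ℤ) * (Nat.choose (c+i) i : ℤ)

lemma kbS_zero (a c : ℕ) : kbS a c 0 = 1 := by simp [kbS]

/-- removing one factor of `1/(1-x)` -/
lemma kbS_L1 (a c m : ℕ) : kbS a (c+1) (m+1) = kbS a (c+1) m + kbS a c (m+1) := by
  unfold kbS
  rw [Finset.sum_range_succ' (fun i => (Nat.choose a (m+1-i) : ℤ) * (Nat.choose (c+1+i) i : ℤ))]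
  rw [Finset.sum_range_succ' (fun i => (Nat.choose a (m+1-i) : ℤ) * (Nat.choose (c+i) i : ℤ))]
  simp only [Nat.sub_zero, Nat.choose_zero_right, Nat.cast_one, mul_one, Nat.succ_sub_succ]
  have key : ∀ i ∈ Finset.range (m+1),
      (Nat.choose a (m-i) : ℤ) * (Nat.choose (c+1+(i+1)) (i+1) : ℤ)
      = (Nat.choose a (m-i) : ℤ) * (Nat.choose (c+1+i) i : ℤ)
        + (Nat.choose a (m-i) : ℤ) * (Nat.choose (c+(i+1)) (i+1) : ℤ) := by
    intro i _
    have hp : (Nat.choose (c+1+(i+1)) (i+1) : ℤ)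
        = (Nat.choose (c+(i+1)) (i+1) : ℤ) + (Nat.choose (c+1+i) i : ℤ) := by
      have h : c+1+(i+1) = (c+(i+1))+1 := by ring
      rw [h, Nat.choose_succ_succ (c+(i+1)) i]
      push_cast
      rw [show c+(i+1) = c+1+i by ring]
      ring
    rw [hp]; ring
  rw [Finset.sum_congr rfl key, Finset.sum_add_distrib]
  ring

/-- removing one factor of `(1+x)` -/
lemma kbS_L2 (a c m : ℕ) : kbS (a+1) c (m+1) = kbS a c (m+1) + kbS a c m := by
  unfold kbS
  rw [Finset.sum_range_succ (fun i => (Nat.choose (a+1) (m+1-i) : ℤ) * (Nat.choose (c+i) i : ℤ))]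
  rw [Finset.sum_range_succ (fun i => (Nat.choose a (m+1-i) : ℤ) * (Nat.choose (c+i) i : ℤ))]
  simp only [Nat.sub_self, Nat.choose_zero_right, Nat.cast_one, one_mul]
  have key : ∀ i ∈ Finset.range (m+1),
      (Nat.choose (a+1) (m+1-i) : ℤ) * (Nat.choose (c+i) i : ℤ)
      = (Nat.choose a (m+1-i) : ℤ) * (Nat.choose (c+i) i : ℤ)
        + (Nat.choose a (m-i) : ℤ) * (Nat.choose (c+i) i : ℤ) := by
    intro i hi
    have hi' : i ≤ m := by simpa [Nat.lt_succ_iff] using hi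
    have h : m+1-i = (m-i)+1 := by omega
    rw [h, Nat.choose_succ_succ a (m-i)]
    push_cast
    ring
  rw [Finset.sum_congr rfl key, Finset.sum_add_distrib]
  ring

/-- `tt m k = [x^m] (1+x)^(2k)/(1-x)^(4k+1)`, the right-hand side inner sum. -/
def kbT (m k : ℕ) : ℤ := kbS (2*k) (4*k) m

lemma kbT_zero (k : ℕ) : kbT 0 k = 1 := kbS_zero _ _

/-- main recurrence, generic case -/
lemma kb_main (m k : ℕ) :
    kbT (m+4) (k+1) + 6 * kbT (m+2) (k+1) + kbT m (k+1)
      = 4 * kbT (m+3) (k+1) + 4 * kbT (m+1) (k+1)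
        + kbT (m+4) k + 2 * kbT (m+3) k + kbT (m+2) k := by
  have e1 : 2*(k+1) = 2*k+2 := by ring
  have e2 : 4*(k+1) = 4*k+4 := by ring
  unfold kbT
  rw [e1, e2]
  -- L1 chain
  have h10 : ∀ j : ℕ, kbS (2*k+2) (4*k+4) (j+1) = kbS (2*k+2) (4*k+4) j + kbS (2*k+2) (4*k+3) (j+1) := fun j => kbS_L1 _ _ _
  have h11 : ∀ j : ℕ, kbS (2*k+2) (4*k+3) (j+1) = kbS (2*k+2) (4*k+3) j + kbS (2*k+2) (4*k+2) (j+1) := fun j => kbS_L1 _ _ _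
  have h12 : ∀ j : ℕ, kbS (2*k+2) (4*k+2) (j+1) = kbS (2*k+2) (4*k+2) j + kbS (2*k+2) (4*k+1) (j+1) := fun j => kbS_L1 _ _ _
  have h13 : ∀ j : ℕ, kbS (2*k+2) (4*k+1) (j+1) = kbS (2*k+2) (4*k+1) j + kbS (2*k+2) (4*k) (j+1) := fun j => kbS_L1 _ _ _
  have h20 : ∀ j : ℕ, kbS (2*k+2) (4*k) (j+1) = kbS (2*k+1) (4*k) (j+1) + kbS (2*k+1) (4*k) j := fun j => kbS_L2 _ _ _
  have h21 : ∀ j : ℕ, kbS (2*k+1) (4*k) (j+1) = kbS (2*k) (4*k) (j+1) + kbS (2*k) (4*k) j := fun j => kbS_L2 _ _ _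
  have a10 := h10 m; have a11 := h10 (m+1); have a12 := h10 (m+2); have a13 := h10 (m+3)
  have b10 := h11 m; have b11 := h11 (m+1); have b12 := h11 (m+2); have b13 := h11 (m+3)
  have c10 := h12 m; have c11 := h12 (m+1); have c12 := h12 (m+2); have c13 := h12 (m+3)
  have d10 := h13 m; have d11 := h13 (m+1); have d12 := h13 (m+2); have d13 := h13 (m+3)
  have e20 := h20 (m+3); have e21 := h21 (m+3); have e22 := h21 (m+2)
  have n1 : m+1+1 = m+2 := rfl
  have n2 : m+2+1 = m+3 := rfl
  have n3 : m+3+1 = m+4 := rfl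
  rw [n1] at a11 b11 c11 d11
  rw [n2] at a12 b12 c12 d12 e22
  rw [n3] at a13 b13 c13 d13 e20 e21
  linarith

lemma kb_bd0 (k : ℕ) : kbT 0 (k+1) = kbT 0 k := by
  rw [kbT_zero, kbT_zero]

lemma kb_bd1 (k : ℕ) :
    kbT 1 (k+1) = 4 * kbT 0 (k+1) + kbT 1 k + 2 * kbT 0 k := by
  have e1 : 2*(k+1) = 2*k+2 := by ring
  have e2 : 4*(k+1) = 4*k+4 := by ring
  unfold kbT
  rw [e1, e2]
  have a0 : kbS (2*k+2) (4*k+4) 1 = kbS (2*k+2) (4*k+4) 0 + kbS (2*k+2) (4*k+3) 1 := kbS_L1 _ _ _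
  have a1 : kbS (2*k+2) (4*k+3) 1 = kbS (2*k+2) (4*k+3) 0 + kbS (2*k+2) (4*k+2) 1 := kbS_L1 _ _ _
  have a2 : kbS (2*k+2) (4*k+2) 1 = kbS (2*k+2) (4*k+2) 0 + kbS (2*k+2) (4*k+1) 1 := kbS_L1 _ _ _
  have a3 : kbS (2*k+2) (4*k+1) 1 = kbS (2*k+2) (4*k+1) 0 + kbS (2*k+2) (4*k) 1 := kbS_L1 _ _ _
  have b0 : kbS (2*k+2) (4*k) 1 = kbS (2*k+1) (4*k) 1 + kbS (2*k+1) (4*k) 0 := kbS_L2 _ _ _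
  have b1 : kbS (2*k+1) (4*k) 1 = kbS (2*k) (4*k) 1 + kbS (2*k) (4*k) 0 := kbS_L2 _ _ _
  simp only [kbS_zero] at *
  linarith

lemma kb_bd2 (k : ℕ) :
    kbT 2 (k+1) + 6 * kbT 0 (k+1)
      = 4 * kbT 1 (k+1) + kbT 2 k + 2 * kbT 1 k + kbT 0 k := by
  have e1 : 2*(k+1) = 2*k+2 := by ring
  have e2 : 4*(k+1) = 4*k+4 := by ring
  unfold kbT
  rw [e1, e2]
  have h10 : ∀ j : ℕ, kbS (2*k+2) (4*k+4) (j+1) = kbS (2*k+2) (4*k+4) j + kbS (2*k+2) (4*k+3) (j+1) := fun j => kbS_L1 _ _ _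
  have h11 : ∀ j : ℕ, kbS (2*k+2) (4*k+3) (j+1) = kbS (2*k+2) (4*k+3) j + kbS (2*k+2) (4*k+2) (j+1) := fun j => kbS_L1 _ _ _
  have h12 : ∀ j : ℕ, kbS (2*k+2) (4*k+2) (j+1) = kbS (2*k+2) (4*k+2) j + kbS (2*k+2) (4*k+1) (j+1) := fun j => kbS_L1 _ _ _
  have h13 : ∀ j : ℕ, kbS (2*k+2) (4*k+1) (j+1) = kbS (2*k+2) (4*k+1) j + kbS (2*k+2) (4*k) (j+1) := fun j => kbS_L1 _ _ _
  have h20 : ∀ j : ℕ, kbS (2*k+2) (4*k) (j+1) = kbS (2*k+1) (4*k) (j+1) + kbS (2*k+1) (4*k) j := fun j => kbS_L2 _ _ _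
  have h21 : ∀ j : ℕ, kbS (2*k+1) (4*k) (j+1) = kbS (2*k) (4*k) (j+1) + kbS (2*k) (4*k) j := fun j => kbS_L2 _ _ _
  have a0 := h10 0; have a1 := h10 1
  have b0 := h11 0; have b1 := h11 1
  have c0 := h12 0; have c1 := h12 1
  have d0 := h13 0; have d1 := h13 1
  have e0 := h20 1; have e1' := h21 1; have e2' := h21 0
  norm_num at *
  simp only [kbS_zero] at *
  linarith

lemma kb_bd3 (k : ℕ) :
    kbT 3 (k+1) + 6 * kbT 1 (k+1)
      = 4 * kbT 2 (k+1) + 4 * kbT 0 (k+1) + kbT 3 k + 2 * kbT 2 k + kbT 1 k := by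
  have e1 : 2*(k+1) = 2*k+2 := by ring
  have e2 : 4*(k+1) = 4*k+4 := by ring
  unfold kbT
  rw [e1, e2]
  have h10 : ∀ j : ℕ, kbS (2*k+2) (4*k+4) (j+1) = kbS (2*k+2) (4*k+4) j + kbS (2*k+2) (4*k+3) (j+1) := fun j => kbS_L1 _ _ _
  have h11 : ∀ j : ℕ, kbS (2*k+2) (4*k+3) (j+1) = kbS (2*k+2) (4*k+3) j + kbS (2*k+2) (4*k+2) (j+1) := fun j => kbS_L1 _ _ _
  have h12 : ∀ j : ℕ, kbS (2*k+2) (4*k+2) (j+1) = kbS (2*k+2) (4*k+2) j + kbS (2*k+2) (4*k+1) (j+1) := fun j => kbS_L1 _ _ _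
  have h13 : ∀ j : ℕ, kbS (2*k+2) (4*k+1) (j+1) = kbS (2*k+2) (4*k+1) j + kbS (2*k+2) (4*k) (j+1) := fun j => kbS_L1 _ _ _
  have h20 : ∀ j : ℕ, kbS (2*k+2) (4*k) (j+1) = kbS (2*k+1) (4*k) (j+1) + kbS (2*k+1) (4*k) j := fun j => kbS_L2 _ _ _
  have h21 : ∀ j : ℕ, kbS (2*k+1) (4*k) (j+1) = kbS (2*k) (4*k) (j+1) + kbS (2*k) (4*k) j := fun j => kbS_L2 _ _ _
  have a0 := h10 0; have a1 := h10 1; have a2 := h10 2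
  have b0 := h11 0; have b1 := h11 1; have b2 := h11 2
  have c0 := h12 0; have c1 := h12 1; have c2 := h12 2
  have d0 := h13 0; have d1 := h13 1; have d2 := h13 2
  have e0 := h20 2; have e1' := h21 2; have e2' := h21 1
  norm_num at *
  simp only [kbS_zero] at *
  linarith

/-- `kbA n = Σ_j C(n+j, 2j) X^j` -/
noncomputable def kbA (n : ℕ) : Polynomial ℤ :=
  ∑ j ∈ Finset.range (n+1), Polynomial.C ((Nat.choose (n+j) (2*j) : ℤ)) * Polynomial.X ^ j

/-- `kbAb n = kbA n (-X)` -/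
noncomputable def kbAb (n : ℕ) : Polynomial ℤ :=
  ∑ j ∈ Finset.range (n+1), Polynomial.C ((-1)^j * (Nat.choose (n+j) (2*j) : ℤ)) * Polynomial.X ^ j

lemma kbA_coeff (n i : ℕ) : (kbA n).coeff i = (Nat.choose (n+i) (2*i) : ℤ) := by
  unfold kbA
  rw [Polynomial.finset_sum_coeff]
  simp only [Polynomial.coeff_C_mul, Polynomial.coeff_X_pow]
  rw [Finset.sum_eq_single i]
  · simp
  · intro j _ hj
    rw [if_neg (fun h => hj h.symm), mul_zero]
  · intro hi
    have hi' : n < i := by simpa [Nat.lt_succ_iff] using hi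
    simp only [if_pos rfl, mul_one]
    have : n + i < 2*i := by omega
    rw [Nat.choose_eq_zero_of_lt this]; simp

lemma kbAb_coeff (n i : ℕ) : (kbAb n).coeff i = (-1)^i * (Nat.choose (n+i) (2*i) : ℤ) := by
  unfold kbAb
  rw [Polynomial.finset_sum_coeff]
  simp only [Polynomial.coeff_C_mul, Polynomial.coeff_X_pow]
  rw [Finset.sum_eq_single i]
  · simp
  · intro j _ hj
    rw [if_neg (fun h => hj h.symm), mul_zero]
  · intro hi
    have hi' : n < i := by simpa [Nat.lt_succ_iff] using hi
    simp only [if_pos rfl, mul_one]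
    have : n + i < 2*i := by omega
    rw [Nat.choose_eq_zero_of_lt this]; simp

/-- the Pascal-squared identity -/
lemma kb_pascal2 (a b : ℕ) :
    Nat.choose (a+2) (b+2) + Nat.choose a (b+2)
      = 2 * Nat.choose (a+1) (b+2) + Nat.choose a b := by
  have h1 : (a+2).choose (b+2) = (a+1).choose (b+1) + (a+1).choose (b+2) :=
    Nat.choose_succ_succ (a+1) (b+1)
  have h2 : (a+1).choose (b+1) = a.choose b + a.choose (b+1) := Nat.choose_succ_succ a b
  have h3 : (a+1).choose (b+2) = a.choose (b+1) + a.choose (b+2) := Nat.choose_succ_succ a (b+1)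
  omega

lemma kbA_rec (n : ℕ) :
    kbA (n+2) = (Polynomial.C 2 + Polynomial.X) * kbA (n+1) - kbA n := by
  ext i
  rw [add_mul, Polynomial.coeff_sub, Polynomial.coeff_add, Polynomial.coeff_C_mul]
  cases i with
  | zero =>
    rw [Polynomial.mul_coeff_zero]
    simp [kbA_coeff]
  | succ j =>
    rw [Polynomial.coeff_X_mul]
    simp only [kbA_coeff]
    rw [show n+2+(j+1) = (n+j+1)+2 by ring, show 2*(j+1) = 2*j+2 by ring,
        show n+1+(j+1) = (n+j+1)+1 by ring, show n+(j+1) = n+j+1 by ring, show n+1+j = n+j+1 by ring]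
    have h := kb_pascal2 (n+j+1) (2*j)
    push_cast
    push_cast at h
    linarith

lemma kbAb_rec (n : ℕ) :
    kbAb (n+2) = (Polynomial.C 2 - Polynomial.X) * kbAb (n+1) - kbAb n := by
  ext i
  rw [sub_mul, Polynomial.coeff_sub, Polynomial.coeff_sub, Polynomial.coeff_C_mul]
  cases i with
  | zero =>
    rw [Polynomial.mul_coeff_zero]
    simp [kbAb_coeff]
  | succ j =>
    rw [Polynomial.coeff_X_mul]
    simp only [kbAb_coeff]
    rw [show n+2+(j+1) = (n+j+1)+2 by ring, show 2*(j+1) = 2*j+2 by ring,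
        show n+1+(j+1) = (n+j+1)+1 by ring, show n+(j+1) = n+j+1 by ring, show n+1+j = n+j+1 by ring]
    have h := kb_pascal2 (n+j+1) (2*j)
    have h' : ((n+j+1+2).choose (2*j+2) : ℤ) + ((n+j+1).choose (2*j+2) : ℤ)
        = 2 * ((n+j+1+1).choose (2*j+2) : ℤ) + ((n+j+1).choose (2*j) : ℤ) := by
      push_cast at h ⊢; linarith
    rw [pow_succ]
    linear_combination ((-1:ℤ)^j * (-1)) * h'

noncomputable def kbB (n : ℕ) : Polynomial ℤ := kbA n * kbAb n

lemma kbB_rec (n : ℕ) :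
    kbB (n+4) = Polynomial.C 4 * kbB (n+3) - kbB (n+3) * Polynomial.X^2
      - Polynomial.C 6 * kbB (n+2) - Polynomial.C 2 * (kbB (n+2) * Polynomial.X^2)
      + Polynomial.C 4 * kbB (n+1) - kbB (n+1) * Polynomial.X^2 - kbB n := by
  have a4 := kbA_rec (n+2)
  have a3 := kbA_rec (n+1)
  have a2 := kbA_rec n
  have b4 := kbAb_rec (n+2)
  have b3 := kbAb_rec (n+1)
  have b2 := kbAb_rec n
  have n3 : n+2+2 = n+4 := rfl
  have n2 : n+1+2 = n+3 := rfl
  have n2' : n+1+1 = n+2 := rfl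
  rw [n3] at a4 b4
  rw [n2, n2'] at a3 b3
  unfold kbB
  rw [a4, b4, a3, b3, a2, b2]
  have c2 : (Polynomial.C 2 : Polynomial ℤ) = 2 := by norm_num
  have c4 : (Polynomial.C 4 : Polynomial ℤ) = 4 := by norm_num
  have c6 : (Polynomial.C 6 : Polynomial ℤ) = 6 := by norm_num
  rw [c2, c4, c6]
  ring

/-- the expected coefficients of `kbB` -/
def kbE (n K : ℕ) : ℤ :=
  if K % 2 = 0 ∧ K / 2 ≤ n then (-1)^(K/2) * kbT (n - K/2) (K/2) else 0

lemma kbE_even (n k : ℕ) (h : k ≤ n) : kbE n (2*k) = (-1)^k * kbT (n-k) k := by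
  unfold kbE
  rw [if_pos]
  · rw [Nat.mul_div_cancel_left k (by norm_num)]
  · refine ⟨by omega, ?_⟩
    rw [Nat.mul_div_cancel_left k (by norm_num)]
    exact h

lemma kbE_big (n k : ℕ) (h : n < k) : kbE n (2*k) = 0 := by
  unfold kbE
  rw [if_neg]
  rintro ⟨-, h2⟩
  rw [Nat.mul_div_cancel_left k (by norm_num)] at h2
  omega

lemma kbE_odd (n K : ℕ) (h : K % 2 = 1) : kbE n K = 0 := by
  unfold kbE
  rw [if_neg]
  rintro ⟨h2, -⟩
  omega

lemma kbT_k0 (m : ℕ) : kbT m 0 = 1 := by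
  unfold kbT kbS
  rw [Finset.sum_eq_single m]
  · simp
  · intro i hi hne
    have hi' : i < m + 1 := by simpa using hi
    rw [Nat.mul_zero, Nat.choose_eq_zero_of_lt (by omega : (0:ℕ) < m - i)]
    simp
  · intro h; exact absurd (Finset.self_mem_range_succ m) h

lemma kbT_11 : kbT 1 1 = 7 := by decide
lemma kbT_21 : kbT 2 1 = 26 := by decide
lemma kbT_12 : kbT 1 2 = 13 := by decide
lemma kbT_01 : kbT 0 1 = 1 := by decide
lemma kbT_02 : kbT 0 2 = 1 := by decide
lemma kbT_03 : kbT 0 3 = 1 := by decide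

lemma kbB_0 : kbB 0 = Polynomial.C 1 := by
  unfold kbB kbA kbAb
  simp [Finset.sum_range_succ]

lemma kbB_1 : kbB 1 = Polynomial.C 1 - Polynomial.C 1 * Polynomial.X^2 := by
  unfold kbB kbA kbAb
  rw [Finset.sum_range_succ, Finset.sum_range_succ, Finset.sum_range_succ, Finset.sum_range_succ]
  norm_num [Nat.choose]
  ring

lemma kbB_2 : kbB 2 = Polynomial.C 1 - Polynomial.C 7 * Polynomial.X^2 + Polynomial.C 1 * Polynomial.X^4 := by
  unfold kbB kbA kbAb
  simp only [Finset.sum_range_succ, Finset.sum_range_zero]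
  norm_num [Nat.choose]
  ring

lemma kbB_3 : kbB 3 = Polynomial.C 1 - Polynomial.C 26 * Polynomial.X^2
    + Polynomial.C 13 * Polynomial.X^4 - Polynomial.C 1 * Polynomial.X^6 := by
  unfold kbB kbA kbAb
  simp only [Finset.sum_range_succ, Finset.sum_range_zero]
  norm_num [Nat.choose]
  ring

lemma kbB_coeff_0 (K : ℕ) : (kbB 0).coeff K = kbE 0 K := by
  rw [kbB_0]
  simp only [Polynomial.coeff_C]
  match K with
  | 0 => norm_num; decide
  | (KK+1) =>
    rw [if_neg (by omega)]
    unfold kbE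
    rw [if_neg (by omega)]

lemma kbB_coeff_1 (K : ℕ) : (kbB 1).coeff K = kbE 1 K := by
  rw [kbB_1]
  simp only [Polynomial.coeff_sub, Polynomial.coeff_C_mul, Polynomial.coeff_X_pow,
    Polynomial.coeff_C]
  match K with
  | 0 => norm_num; decide
  | 1 => norm_num; decide
  | 2 => norm_num; decide
  | (KK+3) =>
    rw [if_neg (by omega), if_neg (by omega)]
    unfold kbE
    rw [if_neg (by omega)]
    ring

lemma kbB_coeff_2 (K : ℕ) : (kbB 2).coeff K = kbE 2 K := by
  rw [kbB_2]
  simp only [Polynomial.coeff_sub, Polynomial.coeff_add, Polynomial.coeff_C_mul,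
    Polynomial.coeff_X_pow, Polynomial.coeff_C]
  match K with
  | 0 => norm_num; decide
  | 1 => norm_num; decide
  | 2 => norm_num; decide
  | 3 => norm_num; decide
  | 4 => norm_num; decide
  | (KK+5) =>
    rw [if_neg (by omega), if_neg (by omega), if_neg (by omega)]
    unfold kbE
    rw [if_neg (by omega)]
    ring

lemma kbB_coeff_3 (K : ℕ) : (kbB 3).coeff K = kbE 3 K := by
  rw [kbB_3]
  simp only [Polynomial.coeff_sub, Polynomial.coeff_add, Polynomial.coeff_C_mul,
    Polynomial.coeff_X_pow, Polynomial.coeff_C]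
  match K with
  | 0 => norm_num; decide
  | 1 => norm_num; decide
  | 2 => norm_num; decide
  | 3 => norm_num; decide
  | 4 => norm_num; decide
  | 5 => norm_num; decide
  | 6 => norm_num; decide
  | (KK+7) =>
    rw [if_neg (by omega), if_neg (by omega), if_neg (by omega), if_neg (by omega)]
    unfold kbE
    rw [if_neg (by omega)]
    ring

lemma kbB_coeff (n : ℕ) : ∀ K, (kbB n).coeff K = kbE n K := by
  induction n using Nat.strong_induction_on with
  | _ n IH =>
  rcases n with _|_|_|_|m
  · exact kbB_coeff_0
  · exact kbB_coeff_1
  · exact kbB_coeff_2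
  · exact kbB_coeff_3
  · have I0 := IH m (by omega)
    have I1 := IH (m+1) (by omega)
    have I2 := IH (m+2) (by omega)
    have I3 := IH (m+3) (by omega)
    show ∀ K, (kbB (m+4)).coeff K = kbE (m+4) K
    intro K
    rw [kbB_rec m]
    simp only [Polynomial.coeff_sub, Polynomial.coeff_add, Polynomial.coeff_C_mul,
      Polynomial.coeff_mul_X_pow', I0, I1, I2, I3]
    rcases Nat.even_or_odd K with ⟨k, hk⟩ | ⟨k, hk⟩
    · -- K = 2k
      subst hk
      have h2k : ∀ j:ℕ, kbE j (k+k) = kbE j (2*k) := by intro j; norm_num [two_mul]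
      simp only [h2k]
      rcases Nat.lt_or_ge k 1 with hk0 | hk1
      · -- k = 0
        interval_cases k
        rw [if_neg (by omega), if_neg (by omega), if_neg (by omega)]
        rw [kbE_even (m+4) 0 (by omega), kbE_even (m+3) 0 (by omega), kbE_even (m+2) 0 (by omega),
            kbE_even (m+1) 0 (by omega), kbE_even m 0 (by omega)]
        simp [kbT_k0]
      · -- k ≥ 1
        obtain ⟨k', rfl⟩ : ∃ k', k = k'+1 := ⟨k-1, by omega⟩
        rw [if_pos (by omega : 2 ≤ k'+1+(k'+1)), if_pos (by omega : 2 ≤ k'+1+(k'+1)),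
            if_pos (by omega : 2 ≤ k'+1+(k'+1))]
        have hsub2 : (k'+1) + (k'+1) - 2 = 2*k' := by omega
        rw [hsub2]
        rcases Nat.lt_or_ge m (k'+1) with hm | hm
        · -- boundary: k'+1 > m
          rcases Nat.lt_or_ge (m+4) (k'+1) with hc | hc
          · -- k'+1 ≥ m+5 : everything vanishes
            rw [kbE_big (m+4) (k'+1) (by omega), kbE_big (m+3) (k'+1) (by omega),
                kbE_big (m+2) (k'+1) (by omega), kbE_big (m+1) (k'+1) (by omega),
                kbE_big m (k'+1) (by omega),
                kbE_big (m+3) k' (by omega), kbE_big (m+2) k' (by omega),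
                kbE_big (m+1) k' (by omega)]
            ring
          · -- k'+1 ∈ {m+1, m+2, m+3, m+4}
            obtain rfl | rfl | rfl | rfl : m = k' ∨ m+1 = k' ∨ m+2 = k' ∨ m+3 = k' := by omega
            · -- k' = m : bd3
              rw [kbE_even (m+4) (m+1) (by omega), kbE_even (m+3) (m+1) (by omega),
                  kbE_even (m+2) (m+1) (by omega), kbE_even (m+1) (m+1) (by omega),
                  kbE_big m (m+1) (by omega),
                  kbE_even (m+3) m (by omega), kbE_even (m+2) m (by omega),
                  kbE_even (m+1) m (by omega)]
              rw [show m+4-(m+1) = 3 by omega, show m+3-(m+1) = 2 by omega,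
                  show m+2-(m+1) = 1 by omega, show m+1-(m+1) = 0 by omega,
                  show m+3-m = 3 by omega, show m+2-m = 2 by omega, show m+1-m = 1 by omega]
              linear_combination ((-1:ℤ)^m) * kb_bd3 m
            · -- k' = m+1 : bd2
              rw [kbE_even (m+4) (m+2) (by omega), kbE_even (m+3) (m+2) (by omega),
                  kbE_even (m+2) (m+2) (by omega), kbE_big (m+1) (m+2) (by omega),
                  kbE_big m (m+2) (by omega),
                  kbE_even (m+3) (m+1) (by omega), kbE_even (m+2) (m+1) (by omega),
                  kbE_even (m+1) (m+1) (by omega)]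
              rw [show m+4-(m+2) = 2 by omega, show m+3-(m+2) = 1 by omega,
                  show m+2-(m+2) = 0 by omega,
                  show m+3-(m+1) = 2 by omega, show m+2-(m+1) = 1 by omega,
                  show m+1-(m+1) = 0 by omega]
              linear_combination ((-1:ℤ)^(m+1)) * kb_bd2 (m+1)
            · -- k' = m+2 : bd1
              rw [kbE_even (m+4) (m+3) (by omega), kbE_even (m+3) (m+3) (by omega),
                  kbE_big (m+2) (m+3) (by omega), kbE_big (m+1) (m+3) (by omega),
                  kbE_big m (m+3) (by omega),
                  kbE_even (m+3) (m+2) (by omega), kbE_even (m+2) (m+2) (by omega),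
                  kbE_big (m+1) (m+2) (by omega)]
              rw [show m+4-(m+3) = 1 by omega, show m+3-(m+3) = 0 by omega,
                  show m+3-(m+2) = 1 by omega, show m+2-(m+2) = 0 by omega]
              linear_combination ((-1:ℤ)^m) * kb_bd1 (m+2)
            · -- k' = m+3 : bd0
              rw [kbE_even (m+4) (m+4) (by omega), kbE_big (m+3) (m+4) (by omega),
                  kbE_big (m+2) (m+4) (by omega), kbE_big (m+1) (m+4) (by omega),
                  kbE_big m (m+4) (by omega),
                  kbE_even (m+3) (m+3) (by omega), kbE_big (m+2) (m+3) (by omega),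
                  kbE_big (m+1) (m+3) (by omega)]
              rw [show m+4-(m+4) = 0 by omega, show m+3-(m+3) = 0 by omega]
              linear_combination ((-1:ℤ)^(m+1)) * kb_bd0 (m+3)
        · -- main case: k'+1 ≤ m
          obtain ⟨j, rfl⟩ : ∃ j, m = j + (k'+1) := ⟨m - (k'+1), by omega⟩
          rw [kbE_even (j+(k'+1)+4) (k'+1) (by omega), kbE_even (j+(k'+1)+3) (k'+1) (by omega),
              kbE_even (j+(k'+1)+2) (k'+1) (by omega), kbE_even (j+(k'+1)+1) (k'+1) (by omega),
              kbE_even (j+(k'+1)) (k'+1) (by omega),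
              kbE_even (j+(k'+1)+3) k' (by omega), kbE_even (j+(k'+1)+2) k' (by omega),
              kbE_even (j+(k'+1)+1) k' (by omega)]
          rw [show j+(k'+1)+4-(k'+1) = j+4 by omega, show j+(k'+1)+3-(k'+1) = j+3 by omega,
              show j+(k'+1)+2-(k'+1) = j+2 by omega, show j+(k'+1)+1-(k'+1) = j+1 by omega,
              show j+(k'+1)-(k'+1) = j by omega,
              show j+(k'+1)+3-k' = j+4 by omega, show j+(k'+1)+2-k' = j+3 by omega,
              show j+(k'+1)+1-k' = j+2 by omega]
          linear_combination ((-1:ℤ)^k') * kb_main j k'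
    · -- K odd
      have hodd : K % 2 = 1 := by omega
      rw [kbE_odd (m+4) _ hodd, kbE_odd (m+3) _ hodd, kbE_odd (m+2) _ hodd,
          kbE_odd (m+1) _ hodd, kbE_odd m _ hodd]
      rcases Nat.lt_or_ge K 2 with h2 | h2
      · rw [if_neg (by omega), if_neg (by omega), if_neg (by omega)]
        ring
      · have hodd2 : (K-2) % 2 = 1 := by omega
        rw [if_pos h2, if_pos h2, if_pos h2, kbE_odd (m+3) _ hodd2, kbE_odd (m+2) _ hodd2,
            kbE_odd (m+1) _ hodd2]
        ring

/-- The key binomial identity: for `k ≤ m`,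
`Σ_{i=0}^{2k} (-1)^i C(m+k+i, m+k-i) C(m+3k-i, m-k+i) = (-1)^k Σ_{i=0}^m C(2k, m-i) C(4k+i, i)`. -/
theorem key_binomial_identity (m k : ℕ) (hk : k ≤ m) :
    ∑ i ∈ Finset.range (2 * k + 1),
        (-1 : ℤ) ^ i * (Nat.choose (m + k + i) (m + k - i) : ℤ) *
          (Nat.choose (m + 3 * k - i) (m - k + i) : ℤ) =
      (-1) ^ k * ∑ i ∈ Finset.range (m + 1),
        (Nat.choose (2 * k) (m - i) : ℤ) * (Nat.choose (4 * k + i) i : ℤ) := by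
  have h3 : (kbB (m+k)).coeff (2*k) = ∑ i ∈ Finset.range (2*k+1),
      (-1:ℤ)^i * (Nat.choose (m+k+i) (m+k-i) : ℤ) * (Nat.choose (m+3*k-i) (m-k+i) : ℤ) := by
    unfold kbB
    rw [Polynomial.coeff_mul, Finset.Nat.sum_antidiagonal_eq_sum_range_succ_mk]
    apply Finset.sum_congr rfl
    intro i hi
    have hi' : i ≤ 2*k := by simpa [Nat.lt_succ_iff] using hi
    rw [kbA_coeff, kbAb_coeff]
    have hs1 : (Nat.choose (m+k+i) (2*i)) = Nat.choose (m+k+i) (m+k-i) := by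
      have h := Nat.choose_symm (show m+k-i ≤ m+k+i by omega)
      rwa [show m+k+i-(m+k-i) = 2*i by omega] at h
    have hs2 : m+k+(2*k-i) = m+3*k-i := by omega
    have hs4 : (Nat.choose (m+3*k-i) (2*(2*k-i))) = Nat.choose (m+3*k-i) (m-k+i) := by
      have h := Nat.choose_symm (show m-k+i ≤ m+3*k-i by omega)
      rwa [show m+3*k-i-(m-k+i) = 2*(2*k-i) by omega] at h
    have hii : (-1:ℤ)^i * (-1)^i = 1 := by
      rw [← pow_add, ← two_mul, pow_mul]
      norm_num
    have hsgn : (-1:ℤ)^(2*k-i) = (-1)^i := by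
      have h4 : (-1:ℤ)^(2*k-i) * (-1)^i = 1 := by
        rw [← pow_add, show 2*k-i+i = 2*k by omega, pow_mul]
        norm_num
      calc (-1:ℤ)^(2*k-i) = ((-1:ℤ)^(2*k-i) * (-1)^i) * (-1)^i := by
              rw [mul_assoc, hii, mul_one]
        _ = (-1:ℤ)^i := by rw [h4, one_mul]
      
    rw [hs1, hs2, hs4, hsgn]
    ring
  have h1 := kbB_coeff (m+k) (2*k)
  have h2 : kbE (m+k) (2*k) = (-1)^k * kbT m k := by
    rw [kbE_even (m+k) k (by omega), show m+k-k = m by omega]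
  rw [h3] at h1
  rw [h1, h2]
  rfl
end

section
/- For all integers m ≥ 1 and k with 1 ≤ k ≤ m and k odd, Σ_{i=0}^{m} (-1)^i · C(m+i, m-i) · C(m+k-i, m-k+i) = 0 in ℤ. -/
open Finset

/-!
Every term with `k < i` vanishes, because then `m + k - i < m - k + i`. On the remaining
range `0 ≤ i ≤ k` the reflection `i ↦ k - i` swaps the two binomial coefficients and changes
the sign `(-1)^i` by `(-1)^k`, so the sum equals `(-1)^k` times itself, hence `0` for odd `k`.
-/

theorem neg_one_pow_sub_of_le {M : Type*} [Monoid M] [HasDistribNeg M] {i k : ℕ} (hik : i ≤ k) :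
    (-1 : M) ^ (k - i) = (-1) ^ k * (-1) ^ i := by
  obtain ⟨j, rfl⟩ := Nat.exists_eq_add_of_le hik
  rw [Nat.add_sub_cancel_left, pow_add, ((Commute.neg_one_left _).pow_left i).eq, mul_assoc,
    ← pow_add, Even.neg_one_pow ⟨i, rfl⟩, mul_one]

def choosePairTerm (m k i : ℕ) : ℤ :=
  (-1) ^ i * ((m + i).choose (m - i) : ℤ) * ((m + k - i).choose (m - k + i) : ℤ)

namespace choosePairTerm

variable {m k i : ℕ}

theorem eq_zero_of_lt (hki : k < i) : choosePairTerm m k i = 0 := by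
  rw [choosePairTerm, Nat.choose_eq_zero_of_lt (by omega : m + k - i < m - k + i)]
  simp

theorem reflect (hkm : k ≤ m) (hik : i ≤ k) :
    choosePairTerm m k (k - i) = (-1) ^ k * choosePairTerm m k i := by
  rw [choosePairTerm, choosePairTerm, neg_one_pow_sub_of_le hik,
    show m + (k - i) = m + k - i by omega, show m - (k - i) = m - k + i by omega,
    show m + k - (k - i) = m + i by omega, show m - k + (k - i) = m - i by omega]
  ring

theorem sum_range_eq_neg_one_pow_mul (hkm : k ≤ m) :
    ∑ i ∈ range (m + 1), choosePairTerm m k i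
      = (-1) ^ k * ∑ i ∈ range (m + 1), choosePairTerm m k i := by
  have htrunc : ∑ i ∈ range (m + 1), choosePairTerm m k i
      = ∑ i ∈ range (k + 1), choosePairTerm m k i := by
    refine (sum_subset (range_subset_range.2 (by omega)) fun i _ hi => ?_).symm
    exact eq_zero_of_lt (by simpa using hi)
  rw [htrunc, mul_sum, ← sum_range_reflect]
  refine sum_congr rfl fun i hi => ?_
  rw [Nat.add_sub_cancel]
  exact reflect hkm (Nat.lt_succ_iff.mp (mem_range.mp hi))

end choosePairTerm

theorem odd_coeff_vanishes_general (m k : ℕ) (hkm : k ≤ m) (hodd : Odd k) :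
    ∑ i ∈ Finset.range (m + 1),
        (-1 : ℤ) ^ i * (Nat.choose (m + i) (m - i) : ℤ) *
          (Nat.choose (m + k - i) (m - k + i) : ℤ) = 0 := by
  have h := choosePairTerm.sum_range_eq_neg_one_pow_mul hkm
  rw [hodd.neg_one_pow, neg_one_mul] at h
  exact self_eq_neg.mp h

/-- For odd `k` with `1 ≤ k ≤ m`,
`Σ_{i=0}^{m} (-1)^i C(m+i, m-i) C(m+k-i, m-k+i) = 0`. -/
theorem odd_coeff_vanishes (m k : ℕ) (hm : 1 ≤ m) (hk1 : 1 ≤ k) (hkm : k ≤ m) (hodd : Odd k) :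
    ∑ i ∈ Finset.range (m + 1),
        (-1 : ℤ) ^ i * (Nat.choose (m + i) (m - i) : ℤ) *
          (Nat.choose (m + k - i) (m - k + i) : ℤ) = 0 :=
  odd_coeff_vanishes_general m k hkm hodd
end

section
/- For all integers k ≥ 0 and m ≥ 0 with 2k ≤ m, the following identity holds in ℚ: Σ_{i=0}^{m} C(2k, m-i)·C(4k+i, i) = C(m+2k, m-2k) · Σ_{i=0}^{2k} (-1)^i · (-2k)_i · (2k+m+1)_i / ((m-2k+1)_i · i!), where (a)_i = a(a+1)⋯(a+i-1) is the rising factorial (Pochhammer symbol). Equivalently, the left side equals C(m+2k, m-2k) · ₂F₁(-2k, 2k+m+1; m-2k+1; -1). -/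
open Finset

lemma term_key (k m i : ℕ) (hm : 2 * k ≤ m) (hi : i ≤ 2 * k) :
    (Nat.choose (m + 2 * k) (m - 2 * k) : ℚ) *
      ((-1 : ℚ) ^ i * (ascPochhammer ℚ i).eval (-(2 * k : ℚ)) *
          (ascPochhammer ℚ i).eval ((2 * k : ℚ) + m + 1) /
        ((ascPochhammer ℚ i).eval ((m : ℚ) - 2 * k + 1) * (Nat.factorial i : ℚ))) =
      (Nat.choose (2 * k) i : ℚ) * (Nat.choose (m + 2 * k + i) (4 * k) : ℚ) := by
  have hA : (ascPochhammer ℚ i).eval (-(2 * k : ℚ))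
      = (-1 : ℚ) ^ i * ((2 * k).descFactorial i : ℚ) := by
    rw [ascPochhammer_eval_neg_eq_descPochhammer]
    congr 1
    exact_mod_cast descPochhammer_eval_eq_descFactorial ℚ (2 * k) i
  have hB : (ascPochhammer ℚ i).eval ((2 * k : ℚ) + m + 1)
      = ((2 * k + m + 1).ascFactorial i : ℚ) := by
    have : ((2 * k : ℚ) + m + 1) = ((2 * k + m + 1 : ℕ) : ℚ) := by push_cast; ring
    rw [this, ← ascPochhammer_eval_cast, ascPochhammer_nat_eq_ascFactorial]
  have hC : (ascPochhammer ℚ i).eval ((m : ℚ) - 2 * k + 1)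
      = ((m - 2 * k + 1).ascFactorial i : ℚ) := by
    have : ((m : ℚ) - 2 * k + 1) = ((m - 2 * k + 1 : ℕ) : ℚ) := by
      push_cast [hm]; ring
    rw [this, ← ascPochhammer_eval_cast, ascPochhammer_nat_eq_ascFactorial]
  rw [hA, hB, hC]
  -- factorial identities, cast to ℚ
  have hB' : ((2 * k + m).factorial : ℚ) * ((2 * k + m + 1).ascFactorial i : ℚ)
      = ((2 * k + m + i).factorial : ℚ) := by
    exact_mod_cast congrArg (Nat.cast : ℕ → ℚ)
      (Nat.factorial_mul_ascFactorial (2 * k + m) i)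
  have hC' : ((m - 2 * k).factorial : ℚ) * ((m - 2 * k + 1).ascFactorial i : ℚ)
      = ((m - 2 * k + i).factorial : ℚ) := by
    exact_mod_cast congrArg (Nat.cast : ℕ → ℚ)
      (Nat.factorial_mul_ascFactorial (m - 2 * k) i)
  have hD : (((2 * k).descFactorial i : ℕ) : ℚ)
      = (Nat.factorial i : ℚ) * (Nat.choose (2 * k) i : ℚ) := by
    exact_mod_cast congrArg (Nat.cast : ℕ → ℚ)
      (Nat.descFactorial_eq_factorial_mul_choose (2 * k) i)
  have h1 : (Nat.choose (m + 2 * k) (m - 2 * k) : ℚ) * ((m - 2 * k).factorial : ℚ)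
      * ((4 * k).factorial : ℚ) = ((m + 2 * k).factorial : ℚ) := by
    have h := Nat.choose_mul_factorial_mul_factorial
      (show m - 2 * k ≤ m + 2 * k by omega)
    rw [show m + 2 * k - (m - 2 * k) = 4 * k by omega] at h
    exact_mod_cast congrArg (Nat.cast : ℕ → ℚ) h
  have h2 : (Nat.choose (m + 2 * k + i) (4 * k) : ℚ) * ((4 * k).factorial : ℚ)
      * ((m - 2 * k + i).factorial : ℚ) = ((m + 2 * k + i).factorial : ℚ) := by
    have h := Nat.choose_mul_factorial_mul_factorial
      (show 4 * k ≤ m + 2 * k + i by omega)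
    rw [show m + 2 * k + i - 4 * k = m - 2 * k + i by omega] at h
    exact_mod_cast congrArg (Nat.cast : ℕ → ℚ) h
  have e1 : (Nat.choose (m + 2 * k) (m - 2 * k) : ℚ)
      = ((m + 2 * k).factorial : ℚ) / (((m - 2 * k).factorial : ℚ) * ((4 * k).factorial : ℚ)) := by
    field_simp
    linear_combination h1
  have e2 : (Nat.choose (m + 2 * k + i) (4 * k) : ℚ)
      = ((m + 2 * k + i).factorial : ℚ)
        / (((4 * k).factorial : ℚ) * ((m - 2 * k + i).factorial : ℚ)) := by
    field_simp
    linear_combination h2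
  have eB : ((2 * k + m + 1).ascFactorial i : ℚ)
      = ((2 * k + m + i).factorial : ℚ) / ((2 * k + m).factorial : ℚ) := by
    field_simp
    linear_combination hB'
  have eC : ((m - 2 * k + 1).ascFactorial i : ℚ)
      = ((m - 2 * k + i).factorial : ℚ) / ((m - 2 * k).factorial : ℚ) := by
    field_simp
    linear_combination hC'
  rw [e1, e2, eB, eC, hD]
  have hmm : (2 * k + m + i) = (m + 2 * k + i) := by omega
  rw [hmm]
  have f1 : ((m - 2 * k).factorial : ℚ) ≠ 0 := Nat.cast_ne_zero.2 (Nat.factorial_ne_zero _)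
  have f2 : ((4 * k).factorial : ℚ) ≠ 0 := Nat.cast_ne_zero.2 (Nat.factorial_ne_zero _)
  have f3 : ((2 * k + m).factorial : ℚ) ≠ 0 := Nat.cast_ne_zero.2 (Nat.factorial_ne_zero _)
  have f4 : ((m - 2 * k + i).factorial : ℚ) ≠ 0 := Nat.cast_ne_zero.2 (Nat.factorial_ne_zero _)
  have f5 : (Nat.factorial i : ℚ) ≠ 0 := Nat.cast_ne_zero.2 (Nat.factorial_ne_zero _)
  have f6 : ((m + 2 * k + i).factorial : ℚ) ≠ 0 := Nat.cast_ne_zero.2 (Nat.factorial_ne_zero _)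
  have hmm2 : (2 * k + m) = (m + 2 * k) := by omega
  rw [hmm2]
  field_simp
  ring_nf
  rw [pow_mul', neg_one_sq, one_pow, mul_one]

/-- For `2k ≤ m`:
`Σ_{i=0}^m C(2k, m-i) C(4k+i, i) = C(m+2k, m-2k) · ₂F₁(-2k, 2k+m+1; m-2k+1; -1)`. -/
theorem sum_eq_hyp_second (k m : ℕ) (hm : 2 * k ≤ m) :
    ∑ i ∈ Finset.range (m + 1),
        (Nat.choose (2 * k) (m - i) : ℚ) * (Nat.choose (4 * k + i) i : ℚ) =
      (Nat.choose (m + 2 * k) (m - 2 * k) : ℚ) *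
        ∑ i ∈ Finset.range (2 * k + 1),
          (-1 : ℚ) ^ i * (ascPochhammer ℚ i).eval (-(2 * k : ℚ)) *
              (ascPochhammer ℚ i).eval ((2 * k : ℚ) + m + 1) /
            ((ascPochhammer ℚ i).eval ((m : ℚ) - 2 * k + 1) * (Nat.factorial i : ℚ)) := by
  rw [Finset.mul_sum]
  rw [Finset.sum_congr rfl (fun i hi => term_key k m i hm (by
    simpa using Nat.lt_succ_iff.mp (Finset.mem_range.mp hi)))]
  -- RHS is now Σ_{i<2k+1} C(2k,i) C(m+2k+i,4k)
  -- reflect the LHS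
  rw [← Finset.sum_range_reflect (fun i => (Nat.choose (2 * k) (m - i) : ℚ)
      * (Nat.choose (4 * k + i) i : ℚ)) (m + 1)]
  -- reflect the RHS
  rw [← Finset.sum_range_reflect (fun i => (Nat.choose (2 * k) i : ℚ)
      * (Nat.choose (m + 2 * k + i) (4 * k) : ℚ)) (2 * k + 1)]
  -- restrict LHS to range (2k+1)
  rw [← Finset.sum_subset (Finset.range_subset_range.2 (by omega : 2 * k + 1 ≤ m + 1))
    (fun i hi hni => by
      simp only [Finset.mem_range, not_lt] at hi hni
      have h1 : m - (m + 1 - 1 - i) = i := by omega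
      rw [h1, Nat.choose_eq_zero_of_lt (by omega), Nat.cast_zero, zero_mul])]
  apply Finset.sum_congr rfl
  intro i hi
  simp only [Finset.mem_range] at hi
  have hik : i ≤ 2 * k := by omega
  have h1 : m - (m + 1 - 1 - i) = i := by omega
  have h2 : m + 1 - 1 - i = m - i := by omega
  rw [h1, h2]
  have h3 : 2 * k - (2 * k + 1 - 1 - i) = i := by
    omega
  have h4 : Nat.choose (2 * k) (2 * k + 1 - 1 - i) = Nat.choose (2 * k) i := by
    rw [show 2 * k + 1 - 1 - i = 2 * k - i by omega]
    exact Nat.choose_symm hik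
  rw [h4]
  congr 1
  have h5 : m + 2 * k + (2 * k + 1 - 1 - i) = 4 * k + (m - i) := by omega
  rw [h5]
  exact_mod_cast congrArg (Nat.cast : ℕ → ℚ)
    (Nat.choose_symm_of_eq_add (show 4 * k + (m - i) = (m - i) + 4 * k by omega))
end

section
/- Fix an integer k ≥ 0 and define S_m := (-1)^k · Σ_{i=0}^{m} C(2k, m-i)·C(4k+i, i) ∈ ℤ for m ≥ 0. Then for all m ≥ 0, (m+2)·S_{m+2} = (6k+1)·S_{m+1} + (m+1+2k)·S_m; moreover S_0 = (-1)^k and S_1 = (-1)^k(6k+1). -/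
open Finset

/-- The sequence `S_m = (-1)^k Σ_{i=0}^m C(2k, m-i) C(4k+i, i)` satisfies
`(m+2) S_{m+2} = (6k+1) S_{m+1} + (m+1+2k) S_m`, with `S_0 = (-1)^k`,
`S_1 = (-1)^k (6k+1)`. -/
theorem S_recurrence (k : ℕ) (S : ℕ → ℤ)
    (hS : ∀ m, S m = (-1) ^ k * ∑ i ∈ Finset.range (m + 1),
      (Nat.choose (2 * k) (m - i) : ℤ) * (Nat.choose (4 * k + i) i : ℤ)) :
    (∀ m : ℕ, ((m : ℤ) + 2) * S (m + 2) = (6 * (k : ℤ) + 1) * S (m + 1) +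
        ((m : ℤ) + 1 + 2 * k) * S m) ∧
      S 0 = (-1) ^ k ∧ S 1 = (-1) ^ k * (6 * (k : ℤ) + 1) := by
  set a : ℕ → ℤ := fun j => (Nat.choose (2 * k) j : ℤ) with ha
  set b : ℕ → ℤ := fun i => (Nat.choose (4 * k + i) i : ℤ) with hb
  have hA : ∀ j : ℕ, ((j : ℤ) + 1) * a (j + 1) = (2 * (k : ℤ) - j) * a j := by
    intro j
    rcases le_or_gt j (2 * k) with h | h
    · have h1 := Nat.choose_succ_right_eq (2 * k) j
      zify [h] at h1
      simp only [ha]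
      linarith
    · have h1 : Nat.choose (2*k) j = 0 := Nat.choose_eq_zero_of_lt h
      have h2 : Nat.choose (2*k) (j+1) = 0 := Nat.choose_eq_zero_of_lt (by omega)
      simp [ha, h1, h2]
  have hB : ∀ i : ℕ, ((i : ℤ) + 1) * b (i + 1) = (4 * (k : ℤ) + 1 + i) * b i := by
    intro i
    have h1 := Nat.add_one_mul_choose_eq (4 * k + i) i
    zify at h1
    have h4 : 4 * k + (i + 1) = 4 * k + i + 1 := by omega
    simp only [hb, h4]
    linarith
  set T : ℕ → ℤ := fun n => ∑ i ∈ range (n + 1), a (n - i) * b i with hT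
  set W : ℕ → ℤ := fun n => ∑ i ∈ range (n + 1), (i : ℤ) * (a (n - i) * b i) with hW
  have key1 : ∀ n : ℕ, ∑ i ∈ range (n + 2), ((n : ℤ) + 1 - i) * (a (n + 1 - i) * b i)
      = (2 * (k : ℤ) - n) * T n + W n := by
    intro n
    rw [Finset.sum_range_succ]
    have hz : ((n : ℤ) + 1 - (n + 1 : ℕ)) = 0 := by push_cast; ring
    rw [hz, zero_mul, add_zero]
    have step : ∀ i ∈ range (n + 1), ((n : ℤ) + 1 - i) * (a (n + 1 - i) * b i)
        = (2 * (k : ℤ) - n + i) * (a (n - i) * b i) := by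
      intro i hi
      have hin : i ≤ n := by simpa [Nat.lt_succ_iff] using hi
      have h1 : n + 1 - i = (n - i) + 1 := by omega
      have h2 : ((n - i : ℕ) : ℤ) = (n : ℤ) - i := by
        push_cast [Nat.cast_sub hin]; ring
      have h3 := hA (n - i)
      rw [h2] at h3
      rw [h1]
      calc ((n : ℤ) + 1 - i) * (a ((n - i) + 1) * b i)
          = (((n : ℤ) - i) + 1) * a ((n - i) + 1) * b i := by ring
        _ = (2 * (k : ℤ) - ((n : ℤ) - i)) * a (n - i) * b i := by rw [h3]
        _ = (2 * (k : ℤ) - n + i) * (a (n - i) * b i) := by ring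
    rw [Finset.sum_congr rfl step]
    simp only [hT, hW, Finset.mul_sum]
    rw [← Finset.sum_add_distrib]
    apply Finset.sum_congr rfl
    intro i hi; ring
  have key2 : ∀ n : ℕ, ∑ i ∈ range (n + 2), (i : ℤ) * (a (n + 1 - i) * b i)
      = (4 * (k : ℤ) + 1) * T n + W n := by
    intro n
    rw [Finset.sum_range_succ']
    simp only [Nat.cast_zero, zero_mul, add_zero]
    have step : ∀ i ∈ range (n + 1), ((i + 1 : ℕ) : ℤ) * (a (n + 1 - (i + 1)) * b (i + 1))
        = (4 * (k : ℤ) + 1 + i) * (a (n - i) * b i) := by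
      intro i hi
      have h1 : n + 1 - (i + 1) = n - i := by omega
      have h3 := hB i
      rw [h1]
      push_cast
      calc ((i : ℤ) + 1) * (a (n - i) * b (i + 1))
          = (((i : ℤ) + 1) * b (i + 1)) * a (n - i) := by ring
        _ = ((4 * (k : ℤ) + 1 + i) * b i) * a (n - i) := by rw [h3]
        _ = (4 * (k : ℤ) + 1 + i) * (a (n - i) * b i) := by ring
    rw [Finset.sum_congr rfl step]
    simp only [hT, hW, Finset.mul_sum]
    rw [← Finset.sum_add_distrib]
    apply Finset.sum_congr rfl
    intro i hi; ring
  have split : ∀ n : ℕ, ((n : ℤ) + 1) * T (n + 1)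
      = ((2 * (k : ℤ) - n) * T n + W n) + ((4 * (k : ℤ) + 1) * T n + W n) := by
    intro n
    rw [← key1 n, ← key2 n, hT]
    simp only
    rw [Finset.mul_sum, ← Finset.sum_add_distrib]
    apply Finset.sum_congr rfl
    intro i hi; ring
  have hWrec : ∀ n : ℕ, W (n + 1) = (4 * (k : ℤ) + 1) * T n + W n := by
    intro n; exact key2 n
  have hWval : ∀ n : ℕ, 2 * W (n + 1) = ((n : ℤ) + 1) * T (n + 1) + ((n : ℤ) + 2 * k + 1) * T n := by
    intro n
    have h1 := split n
    have h2 := hWrec n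
    linarith
  have hTrec : ∀ m : ℕ, ((m : ℤ) + 2) * T (m + 2) = (6 * (k : ℤ) + 1) * T (m + 1)
      + ((m : ℤ) + 1 + 2 * k) * T m := by
    intro m
    have h1 := split (m + 1)
    have h3 := hWval m
    push_cast at h1
    linarith
  refine ⟨?_, ?_, ?_⟩
  · intro m
    rw [hS m, hS (m + 1), hS (m + 2)]
    linear_combination ((-1 : ℤ)) ^ k * hTrec m
  · rw [hS 0]
    simp
  · rw [hS 1]
    rw [show (1:ℕ) + 1 = 2 from rfl, Finset.sum_range_succ, Finset.sum_range_succ,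
      Finset.sum_range_zero]
    norm_num [Nat.choose_one_right]
    ring
end

section
/- Fix an integer k ≥ 0 and define T_m := Σ_{i=0}^{2k} (-1)^i · C(m+k+i, m+k-i) · C(m+3k-i, m-k+i) ∈ ℤ for m ≥ k. Then for all m ≥ k, (m+2)·T_{m+2} = (6k+1)·T_{m+1} + (m+1+2k)·T_m. -/
open Finset

/-- ratio lemma: `C(n+1, r+1) * (r+1) = (n+1) * C(n, r)` over ℤ. -/
private lemma ratio_up (n r : ℕ) :
    (Nat.choose (n+1) (r+1) : ℤ) * (r+1) = ((n:ℤ)+1) * (Nat.choose n r : ℤ) := by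
  exact_mod_cast congrArg (Nat.cast (R := ℤ)) (Nat.add_one_mul_choose_eq n r).symm

/-- ratio lemma: `C(n, r+1) * (r+1) = C(n, r) * (n - r)` over ℤ, given `r ≤ n`. -/
private lemma ratio_right (n r : ℕ) (h : r ≤ n) :
    (Nat.choose n (r+1) : ℤ) * (r+1) = (Nat.choose n r : ℤ) * ((n:ℤ) - r) := by
  have h1 : ((Nat.choose n (r+1) * (r+1) : ℕ) : ℤ) = ((Nat.choose n r * (n - r) : ℕ) : ℤ) :=
    congrArg (Nat.cast (R := ℤ)) (Nat.choose_succ_right_eq n r)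
  have h2 : ((n - r : ℕ) : ℤ) = (n:ℤ) - r := by omega
  push_cast at h1
  rw [h2] at h1
  exact_mod_cast h1

/-- The key `k`-free binomial identity (the WZ certificate identity, doubled). -/
private lemma gen2 (a b c : ℕ) :
    (2*(a:ℤ)+b+c+6) * (Nat.choose (a+2*b+c+5) (a+c+3) : ℤ) * (Nat.choose (a+b+2*c+5) (a+b+3) : ℤ)
  = (6*(b:ℤ)+6*c+14) * (Nat.choose (a+2*b+c+4) (a+c+2) : ℤ) * (Nat.choose (a+b+2*c+4) (a+b+2) : ℤ)
  + (2*(a:ℤ)+3*b+3*c+8) * (Nat.choose (a+2*b+c+3) (a+c+1) : ℤ) * (Nat.choose (a+b+2*c+3) (a+b+1) : ℤ)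
  + ((b:ℤ)+c+2) * ((Nat.choose (a+2*b+c+4) (a+c+2) : ℤ) * (Nat.choose (a+b+2*c+3) (a+b+3) : ℤ)
       + (Nat.choose (a+2*b+c+3) (a+c+3) : ℤ) * (Nat.choose (a+b+2*c+4) (a+b+2) : ℤ)) := by
  -- base chooses: C3X = C(a+2b+c+3, a+c+1), C3Y = C(a+b+2c+3, a+b+1)
  -- relations
  have r4X : (Nat.choose (a+2*b+c+4) (a+c+2) : ℤ) * ((a:ℤ)+c+2)
      = ((a:ℤ)+2*b+c+4) * (Nat.choose (a+2*b+c+3) (a+c+1) : ℤ) := by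
    have := ratio_up (a+2*b+c+3) (a+c+1)
    rw [show a+2*b+c+3+1 = a+2*b+c+4 by omega, show a+c+1+1 = a+c+2 by omega] at this
    push_cast at this ⊢
    linarith
  have r5X : (Nat.choose (a+2*b+c+5) (a+c+3) : ℤ) * (((a:ℤ)+c+3) * ((a:ℤ)+c+2))
      = ((a:ℤ)+2*b+c+5) * ((a:ℤ)+2*b+c+4) * (Nat.choose (a+2*b+c+3) (a+c+1) : ℤ) := by
    have h1 := ratio_up (a+2*b+c+4) (a+c+2)
    rw [show a+2*b+c+4+1 = a+2*b+c+5 by omega, show a+c+2+1 = a+c+3 by omega] at h1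
    push_cast at h1
    linear_combination ((a:ℤ)+c+2) * h1 + ((a:ℤ)+2*b+c+5) * r4X
  have r3X : (Nat.choose (a+2*b+c+3) (a+c+3) : ℤ) * (((a:ℤ)+c+3) * ((a:ℤ)+c+2))
      = (2*(b:ℤ)+2) * (2*(b:ℤ)+1) * (Nat.choose (a+2*b+c+3) (a+c+1) : ℤ) := by
    have h1 := ratio_right (a+2*b+c+3) (a+c+1) (by omega)
    have h2 := ratio_right (a+2*b+c+3) (a+c+2) (by omega)
    rw [show a+c+1+1 = a+c+2 by omega] at h1
    rw [show a+c+2+1 = a+c+3 by omega] at h2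
    push_cast at h1 h2
    linear_combination ((a:ℤ)+c+2) * h2 + (2*(b:ℤ)+1) * h1
  have r4Y : (Nat.choose (a+b+2*c+4) (a+b+2) : ℤ) * ((a:ℤ)+b+2)
      = ((a:ℤ)+b+2*c+4) * (Nat.choose (a+b+2*c+3) (a+b+1) : ℤ) := by
    have := ratio_up (a+b+2*c+3) (a+b+1)
    rw [show a+b+2*c+3+1 = a+b+2*c+4 by omega, show a+b+1+1 = a+b+2 by omega] at this
    push_cast at this ⊢
    linarith
  have r5Y : (Nat.choose (a+b+2*c+5) (a+b+3) : ℤ) * (((a:ℤ)+b+3) * ((a:ℤ)+b+2))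
      = ((a:ℤ)+b+2*c+5) * ((a:ℤ)+b+2*c+4) * (Nat.choose (a+b+2*c+3) (a+b+1) : ℤ) := by
    have h1 := ratio_up (a+b+2*c+4) (a+b+2)
    rw [show a+b+2*c+4+1 = a+b+2*c+5 by omega, show a+b+2+1 = a+b+3 by omega] at h1
    push_cast at h1
    linear_combination ((a:ℤ)+b+2) * h1 + ((a:ℤ)+b+2*c+5) * r4Y
  have r3Y : (Nat.choose (a+b+2*c+3) (a+b+3) : ℤ) * (((a:ℤ)+b+3) * ((a:ℤ)+b+2))
      = (2*(c:ℤ)+2) * (2*(c:ℤ)+1) * (Nat.choose (a+b+2*c+3) (a+b+1) : ℤ) := by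
    have h1 := ratio_right (a+b+2*c+3) (a+b+1) (by omega)
    have h2 := ratio_right (a+b+2*c+3) (a+b+2) (by omega)
    rw [show a+b+1+1 = a+b+2 by omega] at h1
    rw [show a+b+2+1 = a+b+3 by omega] at h2
    push_cast at h1 h2
    linear_combination ((a:ℤ)+b+2) * h2 + (2*(c:ℤ)+1) * h1
  have hD : (((a:ℤ)+c+3) * ((a:ℤ)+c+2) * (((a:ℤ)+b+3) * ((a:ℤ)+b+2))) ≠ 0 := by
    positivity
  refine mul_right_cancel₀ hD ?_
  linear_combination
      ((2*(a:ℤ)+b+c+6) * (Nat.choose (a+b+2*c+5) (a+b+3) : ℤ) * (((a:ℤ)+b+3)*((a:ℤ)+b+2))) * r5X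
    + ((2*(a:ℤ)+b+c+6) * ((a:ℤ)+2*b+c+5) * ((a:ℤ)+2*b+c+4) * (Nat.choose (a+2*b+c+3) (a+c+1) : ℤ)) * r5Y
    - ((6*(b:ℤ)+6*c+14) * ((a:ℤ)+c+3) * (Nat.choose (a+b+2*c+4) (a+b+2) : ℤ) * (((a:ℤ)+b+3)*((a:ℤ)+b+2))) * r4X
    - (((6*(b:ℤ)+6*c+14) * ((a:ℤ)+c+3) * ((a:ℤ)+2*b+c+4)
        + ((b:ℤ)+c+2) * (2*(b:ℤ)+2) * (2*(b:ℤ)+1)) * ((a:ℤ)+b+3) * (Nat.choose (a+2*b+c+3) (a+c+1) : ℤ)) * r4Y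
    - (((b:ℤ)+c+2) * ((a:ℤ)+c+3) * (Nat.choose (a+b+2*c+3) (a+b+3) : ℤ) * (((a:ℤ)+b+3)*((a:ℤ)+b+2))) * r4X
    - (((b:ℤ)+c+2) * ((a:ℤ)+c+3) * ((a:ℤ)+2*b+c+4) * (Nat.choose (a+2*b+c+3) (a+c+1) : ℤ)) * r3Y
    - (((b:ℤ)+c+2) * (Nat.choose (a+b+2*c+4) (a+b+2) : ℤ) * (((a:ℤ)+b+3)*((a:ℤ)+b+2))) * r3X

open Nat in
lemma gen0 (k a c : ℕ) (h : 2*k = c+2) :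
    ((k:ℤ)+a+2) * (Nat.choose (a+2*c+6) (a+2) : ℤ)
  = (6*(k:ℤ)+1) * (Nat.choose (a+2*c+5) (a+1) : ℤ)
  + (3*(k:ℤ)+a+1) * (Nat.choose (a+2*c+4) a : ℤ)
  + (k:ℤ) * (Nat.choose (a+2*c+4) (a+2) : ℤ) := by
  have key : ((k:ℚ)+a+2) * (Nat.choose (a+2*c+6) (a+2) : ℚ)
      = (6*(k:ℚ)+1) * (Nat.choose (a+2*c+5) (a+1) : ℚ)
      + (3*(k:ℚ)+a+1) * (Nat.choose (a+2*c+4) a : ℚ)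
      + (k:ℚ) * (Nat.choose (a+2*c+4) (a+2) : ℚ) := by
    rw [Nat.cast_choose ℚ (show a+2 ≤ a+2*c+6 by omega),
        Nat.cast_choose ℚ (show a+1 ≤ a+2*c+5 by omega),
        Nat.cast_choose ℚ (show a ≤ a+2*c+4 by omega),
        Nat.cast_choose ℚ (show a+2 ≤ a+2*c+4 by omega),
        show a+2*c+6-(a+2) = 2*c+4 by omega,
        show a+2*c+5-(a+1) = 2*c+4 by omega,
        show a+2*c+4-a = 2*c+4 by omega,
        show a+2*c+4-(a+2) = 2*c+2 by omega]
    have f1 : (a+2*c+6)! = (a+2*c+6)*((a+2*c+5)*(a+2*c+4)!) := by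
      rw [show a+2*c+6 = (a+2*c+5)+1 by omega, Nat.factorial_succ,
          show a+2*c+5 = (a+2*c+4)+1 by omega, Nat.factorial_succ]
    have f2 : (a+2*c+5)! = (a+2*c+5)*(a+2*c+4)! := by
      rw [show a+2*c+5 = (a+2*c+4)+1 by omega, Nat.factorial_succ]
    have f3 : (a+2)! = (a+2)*((a+1)*(a)!) := by
      rw [show a+2 = (a+1)+1 by omega, Nat.factorial_succ, Nat.factorial_succ]
    have f4 : (a+1)! = (a+1)*(a)! := Nat.factorial_succ a
    have f5 : (2*c+4)! = (2*c+4)*((2*c+3)*(2*c+2)!) := by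
      rw [show 2*c+4 = (2*c+3)+1 by omega, Nat.factorial_succ,
          show 2*c+3 = (2*c+2)+1 by omega, Nat.factorial_succ]
    rw [f1, f2, f3, f5]
    have hk' : (k:ℚ) = ((c:ℚ)+2)/2 := by
      have := congrArg (Nat.cast : ℕ → ℚ) h
      push_cast at this
      linarith
    rw [hk', f4]
    have n1 : ((a+2*c+4)! : ℚ) ≠ 0 := by exact_mod_cast (Nat.factorial_pos _).ne'
    have n2 : ((a)! : ℚ) ≠ 0 := by exact_mod_cast (Nat.factorial_pos _).ne'
    have n3 : ((2*c+2)! : ℚ) ≠ 0 := by exact_mod_cast (Nat.factorial_pos _).ne'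
    push_cast
    have p1 : ((a:ℚ)+1) ≠ 0 := by positivity
    have p2 : ((a:ℚ)+2) ≠ 0 := by positivity
    have p3 : (2*(c:ℚ)+3) ≠ 0 := by positivity
    have p4 : (2*(c:ℚ)+4) ≠ 0 := by positivity
    field_simp
    ring
  exact_mod_cast key

/-- The WZ certificate function. -/
private def Gg (k m i : ℕ) : ℤ :=
  (-1)^(i+1) * k * (Nat.choose (m+k+i) (m+k+2-i) : ℤ) * (Nat.choose (m+3*k+1-i) (m-k+1+i) : ℤ)

private lemma step (k m i : ℕ) (h1 : 1 ≤ k) (hm : k ≤ m) (hi : i ≤ 2*k) :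
    ((m:ℤ)+2) * ((-1)^i * (Nat.choose (m+2+k+i) (m+2+k-i) : ℤ) * (Nat.choose (m+2+3*k-i) (m+2-k+i) : ℤ))
  - (6*(k:ℤ)+1) * ((-1)^i * (Nat.choose (m+1+k+i) (m+1+k-i) : ℤ) * (Nat.choose (m+1+3*k-i) (m+1-k+i) : ℤ))
  - ((m:ℤ)+1+2*(k:ℤ)) * ((-1)^i * (Nat.choose (m+k+i) (m+k-i) : ℤ) * (Nat.choose (m+3*k-i) (m-k+i) : ℤ))
  = Gg k m (i+1) - Gg k m i := by
  obtain ⟨a, rfl⟩ := Nat.exists_eq_add_of_le hm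
  by_cases hi0 : i = 0
  · subst hi0
    obtain ⟨c, hc⟩ : ∃ c, 2*k = c+2 := ⟨2*k-2, by omega⟩
    simp only [Gg]
    rw [show k+a+2+k-0 = k+a+2+k+0 by omega, Nat.choose_self,
        show k+a+2+3*k-0 = a+2*c+6 by omega, show k+a+2-k+0 = a+2 by omega,
        show k+a+1+k-0 = k+a+1+k+0 by omega, Nat.choose_self,
        show k+a+1+3*k-0 = a+2*c+5 by omega, show k+a+1-k+0 = a+1 by omega,
        show k+a+k-0 = k+a+k+0 by omega, Nat.choose_self,
        show k+a+3*k-0 = a+2*c+4 by omega, show k+a-k+0 = a by omega,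
        show k+a+k+2-(0+1) = k+a+k+(0+1) by omega, Nat.choose_self,
        show k+a+3*k+1-(0+1) = a+2*c+4 by omega, show k+a-k+1+(0+1) = a+2 by omega,
        Nat.choose_eq_zero_of_lt (show k+a+k+0 < k+a+k+2-0 by omega)]
    push_cast
    linear_combination gen0 k a c hc
  · by_cases hitop : i = 2*k
    · subst hitop
      obtain ⟨c, hc⟩ : ∃ c, 2*k = c+2 := ⟨2*k-2, by omega⟩
      simp only [Gg]
      rw [show k+a+2+k+2*k = a+2*c+6 by omega, show k+a+2+k-2*k = a+2 by omega,
          show k+a+2+3*k-2*k = k+a+2-k+2*k by omega, Nat.choose_self,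
          show k+a+1+k+2*k = a+2*c+5 by omega, show k+a+1+k-2*k = a+1 by omega,
          show k+a+1+3*k-2*k = k+a+1-k+2*k by omega, Nat.choose_self,
          show k+a+k+2*k = a+2*c+4 by omega, show k+a+k-2*k = a by omega,
          show k+a+3*k-2*k = k+a-k+2*k by omega, Nat.choose_self,
          Nat.choose_eq_zero_of_lt (show k+a+3*k+1-(2*k+1) < k+a-k+1+(2*k+1) by omega),
          show k+a+k+2-2*k = a+2 by omega,
          show k+a+3*k+1-2*k = k+a-k+1+2*k by omega, Nat.choose_self]
      have hs : (-1:ℤ)^(2*k) = 1 := by rw [pow_mul]; norm_num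
      simp only [pow_succ, hs]
      push_cast
      linear_combination gen0 k a c hc
    · obtain ⟨b, rfl⟩ : ∃ b, i = b+1 := ⟨i-1, by omega⟩
      obtain ⟨c, hc⟩ : ∃ c, 2*k = b+c+2 := ⟨2*k-b-2, by omega⟩
      simp only [Gg]
      rw [show k+a+2+k+(b+1) = a+2*b+c+5 by omega, show k+a+2+k-(b+1) = a+c+3 by omega,
          show k+a+2+3*k-(b+1) = a+b+2*c+5 by omega, show k+a+2-k+(b+1) = a+b+3 by omega,
          show k+a+1+k+(b+1) = a+2*b+c+4 by omega, show k+a+1+k-(b+1) = a+c+2 by omega,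
          show k+a+1+3*k-(b+1) = a+b+2*c+4 by omega, show k+a+1-k+(b+1) = a+b+2 by omega,
          show k+a+k+(b+1) = a+2*b+c+3 by omega, show k+a+k-(b+1) = a+c+1 by omega,
          show k+a+3*k-(b+1) = a+b+2*c+3 by omega, show k+a-k+(b+1) = a+b+1 by omega,
          show k+a+k+(b+1+1) = a+2*b+c+4 by omega, show k+a+k+2-(b+1+1) = a+c+2 by omega,
          show k+a+3*k+1-(b+1+1) = a+b+2*c+3 by omega, show k+a-k+1+(b+1+1) = a+b+3 by omega,
          show k+a+k+2-(b+1) = a+c+3 by omega,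
          show k+a+3*k+1-(b+1) = a+b+2*c+4 by omega, show k+a-k+1+(b+1) = a+b+2 by omega]
      have h2 : (k:ℤ)*2 = (b:ℤ)+(c:ℤ)+2 := by omega
      refine mul_left_cancel₀ (show (2:ℤ) ≠ 0 by norm_num) ?_
      push_cast
      linear_combination (-((-1:ℤ)^b)) * gen2 a b c
        + (-((-1:ℤ)^b) * ((Nat.choose (a+2*b+c+5) (a+c+3) : ℤ) * (Nat.choose (a+b+2*c+5) (a+b+3) : ℤ)
            - 6 * ((Nat.choose (a+2*b+c+4) (a+c+2) : ℤ) * (Nat.choose (a+b+2*c+4) (a+b+2) : ℤ))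
            - 3 * ((Nat.choose (a+2*b+c+3) (a+c+1) : ℤ) * (Nat.choose (a+b+2*c+3) (a+b+1) : ℤ))
            - (Nat.choose (a+2*b+c+4) (a+c+2) : ℤ) * (Nat.choose (a+b+2*c+3) (a+b+3) : ℤ)
            - (Nat.choose (a+2*b+c+3) (a+c+3) : ℤ) * (Nat.choose (a+b+2*c+4) (a+b+2) : ℤ))) * h2

/-- The sequence `T_m = Σ_{i=0}^{2k} (-1)^i C(m+k+i, m+k-i) C(m+3k-i, m-k+i)` satisfies
`(m+2) T_{m+2} = (6k+1) T_{m+1} + (m+1+2k) T_m` for `m ≥ k`. -/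
theorem T_recurrence (k : ℕ) (T : ℕ → ℤ)
    (hT : ∀ m, T m = ∑ i ∈ Finset.range (2 * k + 1),
      (-1 : ℤ) ^ i * (Nat.choose (m + k + i) (m + k - i) : ℤ) *
        (Nat.choose (m + 3 * k - i) (m - k + i) : ℤ)) :
    ∀ m, k ≤ m → ((m : ℤ) + 2) * T (m + 2) = (6 * (k : ℤ) + 1) * T (m + 1) +
      ((m : ℤ) + 1 + 2 * k) * T m := by
  intro m hm
  by_cases hk0 : k = 0
  · subst hk0
    rw [hT (m+2), hT (m+1), hT m]
    simp [Nat.choose_self]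
    ring
  · have h1k : 1 ≤ k := Nat.one_le_iff_ne_zero.mpr hk0
    have hb0 : Gg k m 0 = 0 := by
      simp only [Gg]
      rw [Nat.choose_eq_zero_of_lt (show m+k+0 < m+k+2-0 by omega)]
      ring
    have hb1 : Gg k m (2*k+1) = 0 := by
      simp only [Gg]
      rw [Nat.choose_eq_zero_of_lt (show m+3*k+1-(2*k+1) < m-k+1+(2*k+1) by omega)]
      ring
    have e2 : (∑ i ∈ Finset.range (2*k+1),
        (((m:ℤ)+2) * ((-1)^i * (Nat.choose (m+2+k+i) (m+2+k-i) : ℤ) * (Nat.choose (m+2+3*k-i) (m+2-k+i) : ℤ))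
        - (6*(k:ℤ)+1) * ((-1)^i * (Nat.choose (m+1+k+i) (m+1+k-i) : ℤ) * (Nat.choose (m+1+3*k-i) (m+1-k+i) : ℤ))
        - ((m:ℤ)+1+2*(k:ℤ)) * ((-1)^i * (Nat.choose (m+k+i) (m+k-i) : ℤ) * (Nat.choose (m+3*k-i) (m-k+i) : ℤ))))
        = Gg k m (2*k+1) - Gg k m 0 := by
      rw [← Finset.sum_range_sub (Gg k m)]
      refine Finset.sum_congr rfl fun i hi => ?_
      exact step k m i h1k hm (by simp only [Finset.mem_range] at hi; omega)
    rw [hb0, hb1, sub_zero] at e2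
    rw [Finset.sum_sub_distrib, Finset.sum_sub_distrib, ← Finset.mul_sum, ← Finset.mul_sum,
        ← Finset.mul_sum] at e2
    rw [hT (m+2), hT (m+1), hT m]
    linarith [e2]
end
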